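/- arXiv:1212.1913 — 7 statements merged into one kernel-verified Lean document; each statement's English description precedes it below -/
import Mathlib

section
/- Let q ≥ 2 and n ≥ 1, let F be an alphabet with q elements, let f : {1,…,n} → ℝ, and let h : {0,1,…,n} → ℝ satisfy h(i) ≤ f(i) for i = 1,…,n. Suppose there exist real numbers c_0, c_1, …, c_n with c_j ≥ 0 for j ≥ 1 such that h(i) = Σ_{j=0}^n c_j K_j(i) for all i = 0,1,…,n, where K_j is the Krawtchouk polynomial for parameters n and q. Then every nonempty code C ⊆ F^n with |C| = N has f-potential energy E_f(C) ≥ N·c_0 − h(0). -/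
open Finset

/-- The Krawtchouk polynomial `K_k(x; n, q)` evaluated at a natural number `x`. -/
noncomputable def kraw (n q k x : ℕ) : ℝ :=
  ∑ j ∈ Finset.range (k+1),
    (-1 : ℝ)^j * ((q : ℝ) - 1)^(k-j) * (x.choose j : ℝ) * ((n-x).choose (k-j) : ℝ)

/-- The finite difference operator `Δf(m) = f(m+1) − f(m)`. -/
def fdiff (f : ℕ → ℝ) : ℕ → ℝ := fun m => f (m+1) - f m

/-- `f` is completely monotonic on `{a, a+1, …, b}`:
`(−1)^k Δ^k f(i) ≥ 0` whenever `k ≥ 0` and `a ≤ i ≤ b − k`. -/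
def CompletelyMonotonicOn (f : ℕ → ℝ) (a b : ℕ) : Prop :=
  ∀ k i, a ≤ i → i + k ≤ b → 0 ≤ (-1 : ℝ)^k * (fdiff^[k] f) i

/-- The `f`-potential energy of a code `C ⊆ F^n`:
`E_f(C) = (1/|C|) ∑_{x,y ∈ C, x ≠ y} f(|x−y|)`, where `|x−y|` is Hamming distance. -/
noncomputable def energy {n : ℕ} {F : Type*} [DecidableEq F]
    (f : ℕ → ℝ) (C : Finset (Fin n → F)) : ℝ :=
  (1 / (C.card : ℝ)) * ∑ x ∈ C, ∑ y ∈ C, if x ≠ y then f (hammingDist x y) else 0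

/-!
Delsarte's linear programming argument. Identify the alphabet with `ZMod q` and fix a primitive
character `ψ`. Grouping the words `u` of weight `k` by their support shows
`K_k(wt z) = ∑_{wt u = k} ψ(u ⬝ z)`, hence
`∑_{x,y ∈ C} K_k(d(x,y)) = ∑_{wt u = k} |∑_{x ∈ C} ψ(u ⬝ x)|² ≥ 0`.
Expanding `h` in Krawtchouk polynomials with `c_j ≥ 0` for `j ≥ 1` then gives
`∑_{x,y ∈ C} h(d(x,y)) ≥ N² c₀`. Removing the diagonal terms `h 0` and using `h ≤ f` off the
diagonal yields the bound.
-/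

section Subsets

variable {ι : Type*} [Fintype ι] [DecidableEq ι]

theorem card_powersetCard_filter_card_inter (D : Finset ι) {k j : ℕ} (hj : j ≤ k) :
    #{S ∈ powersetCard k univ | #(S ∩ D) = j} = (#D).choose j * (#Dᶜ).choose (k - j) := by
  rw [← card_powersetCard, ← card_powersetCard, ← card_product]
  refine card_nbij' (fun S => (S ∩ D, S ∩ Dᶜ)) (fun P => P.1 ∪ P.2) ?_ ?_ ?_ ?_
  · intro S hS
    simp only [coe_filter, mem_powersetCard_univ, coe_product, Set.mem_prod, mem_coe] at hS ⊢
    have := card_inter_add_card_sdiff S D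
    rw [sdiff_eq_inter_compl] at this
    grind
  · intro P hP
    simp only [coe_product, Set.mem_prod, mem_coe, mem_powersetCard] at hP
    have hdisj : Disjoint P.1 P.2 :=
      disjoint_of_subset_left hP.1.1 (disjoint_of_subset_right hP.2.1 disjoint_compl_right)
    have hinter : (P.1 ∪ P.2) ∩ D = P.1 := by grind [mem_compl]
    simp only [mem_coe, mem_filter, mem_powersetCard_univ, hinter, card_union_of_disjoint hdisj]
    omega
  · intro S _
    simp only [← inter_union_distrib_left, union_compl, inter_univ]
  · intro P hP
    simp only [coe_product, Set.mem_prod, mem_coe, mem_powersetCard] at hP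
    ext1 <;> grind [mem_compl]

theorem sum_powersetCard_prod_ite_mem {R : Type*} [CommSemiring R] (D : Finset ι) (k : ℕ)
    (a b : R) :
    ∑ S ∈ powersetCard k univ, ∏ i ∈ S, (if i ∈ D then a else b) =
      ∑ j ∈ range (k + 1), ((#D).choose j * (#Dᶜ).choose (k - j) : ℕ) * (a ^ j * b ^ (k - j)) := by
  have hmaps : ∀ S ∈ powersetCard k univ, #(S ∩ D) ∈ range (k + 1) := fun S hS => by
    rw [mem_range, Nat.lt_succ_iff, ← (mem_powersetCard_univ.1 hS)]
    exact card_le_card inter_subset_left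
  rw [← sum_fiberwise_of_maps_to hmaps]
  refine sum_congr rfl fun j hj => ?_
  have hterm : ∀ S ∈ {S ∈ powersetCard k (univ : Finset ι) | #(S ∩ D) = j},
      ∏ i ∈ S, (if i ∈ D then a else b) = a ^ j * b ^ (k - j) := fun S hS => by
    rw [mem_filter, mem_powersetCard_univ] at hS
    rw [prod_ite, prod_const, prod_const, filter_mem_eq_inter, filter_notMem_eq_sdiff,
      card_sdiff, inter_comm D, hS.1, hS.2]
  rw [sum_congr rfl hterm, sum_const, nsmul_eq_mul,
    card_powersetCard_filter_card_inter D (Nat.lt_succ_iff.1 (mem_range.1 hj))]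

theorem sum_filter_support_prod_eq_prod_sum {R M : Type*} [Fintype R] [DecidableEq R] [Zero R]
    [CommSemiring M] (g : ι → R → M) (hg : ∀ i, g i 0 = 1) (S : Finset ι) :
    ∑ u : ι → R with ({i | u i ≠ 0} : Finset ι) = S, ∏ i, g i (u i) =
      ∏ i ∈ S, ∑ a ∈ univ.erase 0, g i a := by
  have hfiber : ({u : ι → R | ({i | u i ≠ 0} : Finset ι) = S} : Finset (ι → R)) =
      Fintype.piFinset fun i => if i ∈ S then univ.erase (0 : R) else {0} := by
    ext u
    simp only [mem_filter, mem_univ, true_and, Fintype.mem_piFinset, Finset.ext_iff]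
    refine forall_congr' fun i => ?_
    split_ifs <;> simp [*]
  rw [hfiber, ← prod_univ_sum]
  calc ∏ i, ∑ a ∈ (if i ∈ S then univ.erase 0 else {0}), g i a
      = ∏ i, if i ∈ S then ∑ a ∈ univ.erase 0, g i a else 1 :=
        prod_congr rfl fun i _ => by split_ifs <;> simp [hg]
    _ = ∏ i ∈ S, ∑ a ∈ univ.erase 0, g i a := by rw [prod_ite_mem, univ_inter]

end Subsets

theorem AddChar.map_sum_eq_prod {ι A M : Type*} [AddCommMonoid A] [CommMonoid M]
    (ψ : AddChar A M) (s : Finset ι) (f : ι → A) : ψ (∑ i ∈ s, f i) = ∏ i ∈ s, ψ (f i) := by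
  induction s using Finset.cons_induction <;> simp [*, AddChar.map_add_eq_mul]

theorem AddChar.sum_erase_zero_apply_mul {R R' : Type*} [CommRing R] [Fintype R] [DecidableEq R]
    [CommRing R'] [IsDomain R'] {ψ : AddChar R R'} (hψ : ψ.IsPrimitive) (z : R) :
    ∑ a ∈ univ.erase 0, ψ (a * z) = if z = 0 then (Fintype.card R : R') - 1 else -1 := by
  rw [sum_erase_eq_sub (mem_univ 0), sum_mulShift z hψ, zero_mul, map_zero_eq_one]
  split_ifs <;> ring

open Matrix in
theorem kraw_hammingNorm_eq_sum_addChar_dotProduct {n : ℕ} {R : Type*} [CommRing R] [Fintype R]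
    [DecidableEq R] {ψ : AddChar R ℂ} (hψ : ψ.IsPrimitive) (k : ℕ) (z : Fin n → R) :
    (kraw n (Fintype.card R) k (hammingNorm z) : ℂ) =
      ∑ u : Fin n → R with hammingNorm u = k, ψ (u ⬝ᵥ z) := by
  set D : Finset (Fin n) := {i | z i ≠ 0}
  have hmaps : ∀ u ∈ ({u | hammingNorm u = k} : Finset (Fin n → R)),
      ({i | u i ≠ 0} : Finset (Fin n)) ∈ powersetCard k univ := fun u hu =>
    mem_powersetCard_univ.2 (mem_filter.1 hu).2
  have hfiber : ∀ S ∈ powersetCard k (univ : Finset (Fin n)),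
      ∑ u ∈ {u : Fin n → R | hammingNorm u = k} with ({i | u i ≠ 0} : Finset (Fin n)) = S,
        ψ (u ⬝ᵥ z) = ∏ i ∈ S, if i ∈ D then (-1 : ℂ) else (Fintype.card R : ℂ) - 1 := by
    intro S hS
    have hweight : ∀ u : Fin n → R,
        hammingNorm u = k ∧ ({i | u i ≠ 0} : Finset (Fin n)) = S ↔
          ({i | u i ≠ 0} : Finset (Fin n)) = S :=
      fun u => ⟨And.right, fun h => ⟨by rw [hammingNorm, h, mem_powersetCard_univ.1 hS], h⟩⟩
    rw [filter_filter, filter_congr fun u _ => hweight u]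
    simp only [dotProduct, AddChar.map_sum_eq_prod]
    rw [sum_filter_support_prod_eq_prod_sum (fun i a => ψ (a * z i)) (by simp)]
    refine prod_congr rfl fun i _ => ?_
    rw [AddChar.sum_erase_zero_apply_mul hψ]
    by_cases hz : z i = 0 <;> simp [D, hz]
  rw [← sum_fiberwise_of_maps_to hmaps, sum_congr rfl hfiber, sum_powersetCard_prod_ite_mem]
  have hD : #D = hammingNorm z := rfl
  have hDc : #Dᶜ = n - hammingNorm z := by rw [card_compl, Fintype.card_fin, hD]
  simp only [kraw, hD, hDc]
  push_cast
  refine sum_congr rfl fun j _ => by ring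

open Matrix ComplexConjugate in
theorem sum_sum_kraw_hammingDist_nonneg_of_isPrimitive {n : ℕ} {R : Type*} [CommRing R]
    [Fintype R] [DecidableEq R] {ψ : AddChar R ℂ} (hψ : ψ.IsPrimitive) (k : ℕ)
    (C : Finset (Fin n → R)) :
    0 ≤ ∑ x ∈ C, ∑ y ∈ C, kraw n (Fintype.card R) k (hammingDist x y) := by
  have hchar : ∀ u x y : Fin n → R, ψ (u ⬝ᵥ (-x + y)) = conj (ψ (u ⬝ᵥ x)) * ψ (u ⬝ᵥ y) :=
    fun u x y => by
      rw [dotProduct_add, dotProduct_neg, AddChar.map_add_eq_mul, AddChar.map_neg_eq_conj]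
  have hsq : ((∑ x ∈ C, ∑ y ∈ C, kraw n (Fintype.card R) k (hammingDist x y) : ℝ) : ℂ) =
      ((∑ u : Fin n → R with hammingNorm u = k, ‖∑ x ∈ C, ψ (u ⬝ᵥ x)‖ ^ 2 : ℝ) : ℂ) := by
    push_cast
    simp_rw [hammingDist_eq_hammingNorm, kraw_hammingNorm_eq_sum_addChar_dotProduct hψ, hchar,
      ← Complex.conj_mul', map_sum, sum_mul_sum]
    rw [sum_congr rfl fun x _ => sum_comm]
    exact sum_comm
  exact (Complex.ofReal_inj.1 hsq).symm ▸ sum_nonneg fun u _ => sq_nonneg _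

theorem sum_sum_kraw_hammingDist_nonneg {n q : ℕ} [NeZero q] {F : Type*} [Fintype F]
    [DecidableEq F] (hF : Fintype.card F = q) (k : ℕ) (C : Finset (Fin n → F)) :
    0 ≤ ∑ x ∈ C, ∑ y ∈ C, kraw n q k (hammingDist x y) := by
  let e : F ≃ ZMod q := Fintype.equivOfCardEq (by rw [hF, ZMod.card])
  let T : (Fin n → F) ↪ (Fin n → ZMod q) :=
    ⟨fun x => e ∘ x, fun x y h => funext fun i => e.injective (congrFun h i)⟩
  have h := sum_sum_kraw_hammingDist_nonneg_of_isPrimitive (ZMod.isPrimitive_stdAddChar q) k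
    (C.map T)
  have hT : ∀ x y, hammingDist (T x) (T y) = hammingDist x y := fun _ _ =>
    hammingDist_comp (fun _ => e) fun _ => e.injective
  simpa only [ZMod.card, sum_map, hT] using h

theorem kraw_zero (n q x : ℕ) : kraw n q 0 x = 1 := by
  simp [kraw]

section Energy

variable {n : ℕ} {F : Type*} [DecidableEq F]

theorem hammingDist_le_length (x y : Fin n → F) : hammingDist x y ≤ n :=
  hammingDist_le_card_fintype.trans_eq (Fintype.card_fin n)

theorem card_mul_energy (f : ℕ → ℝ) (C : Finset (Fin n → F)) :
    #C * energy f C = ∑ x ∈ C, ∑ y ∈ C, f (hammingDist x y) - #C * f 0 := by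
  rcases C.eq_empty_or_nonempty with rfl | hC
  · simp
  have hoff : ∀ x ∈ C, ∑ y ∈ C, (if x ≠ y then f (hammingDist x y) else 0) =
      ∑ y ∈ C, f (hammingDist x y) - f 0 := fun x hx => by
    rw [← sum_filter, filter_ne, sum_erase_eq_sub hx, hammingDist_self]
  rw [energy, ← mul_assoc, mul_one_div_cancel (by exact_mod_cast hC.card_ne_zero), one_mul,
    sum_congr rfl hoff, sum_sub_distrib, sum_const, nsmul_eq_mul]

theorem energy_mono {f g : ℕ → ℝ} (hfg : ∀ i, 1 ≤ i → i ≤ n → f i ≤ g i)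
    (C : Finset (Fin n → F)) : energy f C ≤ energy g C := by
  refine mul_le_mul_of_nonneg_left (sum_le_sum fun x _ => sum_le_sum fun y _ => ?_) (by positivity)
  split_ifs with hxy
  · exact hfg _ (hammingDist_pos.2 hxy) (hammingDist_le_length x y)
  · rfl

end Energy

theorem card_sq_mul_le_sum_sum_of_kraw_expansion {n q : ℕ} [NeZero q] {F : Type*} [Fintype F]
    [DecidableEq F] (hF : Fintype.card F = q) {h c : ℕ → ℝ}
    (hc : ∀ j, 1 ≤ j → j ≤ n → 0 ≤ c j)
    (hexp : ∀ i, i ≤ n → h i = ∑ j ∈ range (n + 1), c j * kraw n q j i) (C : Finset (Fin n → F)) :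
    (#C : ℝ) ^ 2 * c 0 ≤ ∑ x ∈ C, ∑ y ∈ C, h (hammingDist x y) := by
  have hsum : ∑ x ∈ C, ∑ y ∈ C, h (hammingDist x y) =
      ∑ j ∈ range (n + 1), c j * ∑ x ∈ C, ∑ y ∈ C, kraw n q j (hammingDist x y) := by
    simp_rw [hexp _ (hammingDist_le_length _ _), mul_sum]
    rw [sum_congr rfl fun x _ => sum_comm]
    exact sum_comm
  have htail :
      0 ≤ ∑ j ∈ range n, c (j + 1) * ∑ x ∈ C, ∑ y ∈ C, kraw n q (j + 1) (hammingDist x y) :=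
    sum_nonneg fun j hj => mul_nonneg (hc _ j.succ_pos (mem_range.1 hj))
      (sum_sum_kraw_hammingDist_nonneg hF _ C)
  rw [hsum, sum_range_succ']
  simp only [kraw_zero, sum_const, nsmul_eq_mul, mul_one]
  nlinarith

theorem lp_energy_bound_general {q n : ℕ} (hq : 2 ≤ q)
    {F : Type*} [Fintype F] [DecidableEq F] (hF : Fintype.card F = q)
    (f h : ℕ → ℝ) (hhf : ∀ i, 1 ≤ i → i ≤ n → h i ≤ f i)
    (c : ℕ → ℝ) (hc : ∀ j, 1 ≤ j → j ≤ n → 0 ≤ c j)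
    (hexp : ∀ i, i ≤ n → h i = ∑ j ∈ Finset.range (n+1), c j * kraw n q j i)
    (C : Finset (Fin n → F)) (hC : C.Nonempty) (N : ℕ) (hN : C.card = N) :
    (N : ℝ) * c 0 - h 0 ≤ energy f C := by
  have : NeZero q := ⟨by omega⟩
  subst hN
  have hcard : (0 : ℝ) < #C := by exact_mod_cast hC.card_pos
  have hdelsarte := card_sq_mul_le_sum_sum_of_kraw_expansion hF hc hexp C
  have henergy := card_mul_energy h C
  have hbound : #C * c 0 - h 0 ≤ energy h C := by
    refine le_of_mul_le_mul_left ?_ hcard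
    nlinarith
  exact hbound.trans (energy_mono hhf C)

/-- linear programming bound for energy, Proposition 2.1:
if `h ≤ f` on `{1,…,n}` and `h` has a Krawtchouk expansion with coefficients
`c j ≥ 0` for `j ≥ 1`, then every nonempty code `C ⊆ F^n` with `|C| = N`
satisfies `E_f(C) ≥ N·c₀ − h(0)`. -/
theorem lp_energy_bound {q n : ℕ} (hq : 2 ≤ q) (hn : 1 ≤ n)
    {F : Type*} [Fintype F] [DecidableEq F] (hF : Fintype.card F = q)
    (f h : ℕ → ℝ) (hhf : ∀ i, 1 ≤ i → i ≤ n → h i ≤ f i)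
    (c : ℕ → ℝ) (hc : ∀ j, 1 ≤ j → j ≤ n → 0 ≤ c j)
    (hexp : ∀ i, i ≤ n → h i = ∑ j ∈ Finset.range (n+1), c j * kraw n q j i)
    (C : Finset (Fin n → F)) (hC : C.Nonempty) (N : ℕ) (hN : C.card = N) :
    (N : ℝ) * c 0 - h 0 ≤ energy f C :=
  lp_energy_bound_general hq hF f h hhf c hc hexp C hC N hN
end

section
/- A function f : {0,1,…,n} → ℝ is completely monotonic if and only if it is a nonnegative linear combination of the fundamental potential functions f_0, f_1, …, f_n defined by f_j(x) = C(n−x, j); that is, f is completely monotonic exactly when there exist reals c_0,…,c_n ≥ 0 with f(x) = Σ_{j=0}^n c_j C(n−x, j) for all x ∈ {0,1,…,n}. -/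
open Finset

/-!
Reflecting `x ↦ n - x` turns complete monotonicity of `f` into nonnegativity of every forward
difference of `g m = f (n - m)` on `{0, …, n}`. The Gregory–Newton formula
`g m = ∑ j, C(m, j) Δʲ g 0` then exhibits `g` as a combination of the `C(·, j)` with coefficients
`Δʲ g 0 ≥ 0`; conversely `Δᵏ C(·, j) = C(·, j - k)` (or `0`), so a nonnegative combination of
binomial coefficients has nonnegative forward differences.
-/

open Function

theorem fwdDiff_iter_congr {M G : Type*} [AddCommMonoid M] [AddCommGroup G] {h y : M} {k : ℕ}
    {f g : M → G} (hfg : ∀ i ≤ k, f (y + i • h) = g (y + i • h)) :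
    (fwdDiff h)^[k] f y = (fwdDiff h)^[k] g y := by
  simp only [fwdDiff_iter_eq_sum_shift]
  exact sum_congr rfl fun i hi ↦ by rw [hfg i (Nat.lt_succ_iff.mp (mem_range.mp hi))]

theorem fwdDiff_iter_comp_tsub {G : Type*} [AddCommGroup G] (f : ℕ → G) {n m k : ℕ}
    (hmk : m + k ≤ n) :
    (fwdDiff 1)^[k] (fun x ↦ f (n - x)) m = (-1 : ℤ) ^ k • (fwdDiff 1)^[k] f (n - (m + k)) := by
  induction k generalizing m with
  | zero => simp
  | succ k ih =>
    have hshift : n - (m + k) = n - (m + (k + 1)) + 1 := by omega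
    rw [iterate_succ_apply', iterate_succ_apply', fwdDiff, fwdDiff, ih (by omega), ih (by omega),
      show m + 1 + k = m + (k + 1) by omega, hshift, pow_succ, mul_neg_one, neg_smul, smul_sub]
    abel

theorem fwdDiff_iter_choose_nonneg {R : Type*} [Ring R] [PartialOrder R] [IsOrderedRing R]
    (j k m : ℕ) : 0 ≤ (fwdDiff 1)^[k] (fun x ↦ (x.choose j : R)) m := by
  induction k generalizing j with
  | zero => simp
  | succ k ih =>
    rw [iterate_succ_apply]
    cases j with
    | zero => simp [iterate_fixed]
    | succ j =>
      have hpascal : fwdDiff 1 (fun x ↦ (x.choose (j + 1) : R)) = fun x ↦ (x.choose j : R) := by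
        ext x; simp [fwdDiff, Nat.choose_succ_succ']
      rw [hpascal]
      exact ih j

theorem fwdDiff_iter_sum_mul_choose_nonneg {R : Type*} [Ring R] [PartialOrder R]
    [IsOrderedRing R] {s : Finset ℕ} {c : ℕ → R} (hc : ∀ j ∈ s, 0 ≤ c j) (k m : ℕ) :
    0 ≤ (fwdDiff 1)^[k] (fun x ↦ ∑ j ∈ s, c j * x.choose j) m := by
  have hsum : (fun x : ℕ ↦ ∑ j ∈ s, c j * (x.choose j : R)) =
      ∑ j ∈ s, c j • fun x ↦ (x.choose j : R) := by
    ext; simp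
  rw [hsum, fwdDiff_iter_finsetSum, Finset.sum_apply]
  refine sum_nonneg fun j hj ↦ ?_
  rw [fwdDiff_iter_const_smul, Pi.smul_apply, smul_eq_mul]
  exact mul_nonneg (hc j hj) (fwdDiff_iter_choose_nonneg j k m)

theorem eq_sum_fwdDiff_iter_mul_choose {R : Type*} [Ring R] (g : ℕ → R) {m n : ℕ}
    (hmn : m ≤ n) : g m = ∑ j ∈ range (n + 1), (fwdDiff 1)^[j] g 0 * m.choose j := by
  calc g m = ∑ j ∈ range (m + 1), (fwdDiff 1)^[j] g 0 * m.choose j := by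
        simpa [nsmul_eq_mul, Nat.cast_comm] using shift_eq_sum_fwdDiff_iter 1 g m 0
    _ = _ := sum_subset (range_subset_range.2 (by omega)) fun j _ hj ↦ by
        rw [Nat.choose_eq_zero_of_lt (by simpa using hj), Nat.cast_zero, mul_zero]

theorem fwdDiff_iter_nonneg_iff_eq_sum_mul_choose {R : Type*} [Ring R] [PartialOrder R]
    [IsOrderedRing R] (g : ℕ → R) (n : ℕ) :
    (∀ k m, m + k ≤ n → 0 ≤ (fwdDiff 1)^[k] g m) ↔
      ∃ c : ℕ → R, (∀ j ≤ n, 0 ≤ c j) ∧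
        ∀ m ≤ n, g m = ∑ j ∈ range (n + 1), c j * m.choose j := by
  constructor
  · intro hg
    exact ⟨fun j ↦ (fwdDiff 1)^[j] g 0, fun j hj ↦ hg j 0 (by omega),
      fun m hm ↦ eq_sum_fwdDiff_iter_mul_choose g hm⟩
  · rintro ⟨c, hc, hg⟩ k m hmk
    rw [fwdDiff_iter_congr (g := fun x ↦ ∑ j ∈ range (n + 1), c j * x.choose j)
      fun i hi ↦ hg _ (by simp; omega)]
    exact fwdDiff_iter_sum_mul_choose_nonneg
      (fun j hj ↦ hc j (Nat.lt_succ_iff.mp (mem_range.mp hj))) k m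

theorem completelyMonotonicOn_zero_iff_fwdDiff_iter_reflect_nonneg (f : ℕ → ℝ) (n : ℕ) :
    CompletelyMonotonicOn f 0 n ↔
      ∀ k m, m + k ≤ n → 0 ≤ (fwdDiff 1)^[k] (fun x ↦ f (n - x)) m := by
  have hsign (k m : ℕ) (hmk : m + k ≤ n) :
      (fwdDiff 1)^[k] (fun x ↦ f (n - x)) m = (-1 : ℝ) ^ k * fdiff^[k] f (n - (m + k)) := by
    rw [fwdDiff_iter_comp_tsub f hmk, zsmul_eq_mul]
    push_cast
    rfl
  constructor
  · intro hf k m hmk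
    rw [hsign k m hmk]
    exact hf k _ (Nat.zero_le _) (by omega)
  · intro hf k i _ hik
    simpa [hsign k (n - (i + k)) (by omega), show n - (n - (i + k) + k) = i by omega]
      using hf k (n - (i + k)) (by omega)

/-- Lemma 2.2: `f : {0,1,…,n} → ℝ` is completely monotonic
iff it is a nonnegative combination of the fundamental potential functions
`f_j(x) = C(n−x, j)`. -/
theorem completelyMonotonic_iff_nonneg_comb {n : ℕ} (f : ℕ → ℝ) :
    CompletelyMonotonicOn f 0 n ↔
      ∃ c : ℕ → ℝ, (∀ j, j ≤ n → 0 ≤ c j) ∧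
        ∀ x, x ≤ n → f x = ∑ j ∈ Finset.range (n+1), c j * ((n-x).choose j : ℝ) := by
  rw [completelyMonotonicOn_zero_iff_fwdDiff_iter_reflect_nonneg,
    fwdDiff_iter_nonneg_iff_eq_sum_mul_choose]
  refine exists_congr fun c ↦ and_congr_right fun _ ↦ ⟨fun h x hx ↦ ?_, fun h m hm ↦ ?_⟩
  · simpa [Nat.sub_sub_self hx] using h (n - x) (Nat.sub_le n x)
  · simpa [Nat.sub_sub_self hm] using h (n - m) (Nat.sub_le n m)
end

section
/- Let q ≥ 2, n ≥ 1, and let 𝐚 be a quasicode of length n over an alphabet of size q. Then 𝐚 is a universally optimal quasicode if and only if its dual 𝐚^⊥ is a universally optimal quasicode. -/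
open Finset

/-- A quasicode of length `n` and size `N` over an alphabet of size `q`,
recorded via its entries `A 0, …, A n`. -/
structure IsQuasicode (q n : ℕ) (N : ℝ) (A : ℕ → ℝ) : Prop where
  nonneg : ∀ i, i ≤ n → 0 ≤ A i
  delsarte : ∀ j, j ≤ n → 0 ≤ ∑ i ∈ Finset.range (n+1), A i * kraw n q j i
  size : ∑ i ∈ Finset.range (n+1), A i = N
  zeroth : A 0 = 1

/-- A universally optimal quasicode: a quasicode that minimizes `f`-energy
among all quasicodes of the same length and size, for every completely
monotonic potential function `f`. -/
def IsUOQuasicode (q n : ℕ) (N : ℝ) (A : ℕ → ℝ) : Prop :=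
  IsQuasicode q n N A ∧
    ∀ f : ℕ → ℝ, CompletelyMonotonicOn f 0 n →
      ∀ B : ℕ → ℝ, IsQuasicode q n N B →
        ∑ i ∈ Finset.range (n+1), f i * A i ≤ ∑ i ∈ Finset.range (n+1), f i * B i

/-- The quasicode `A` (of size `N`) is a `t`-design: `A^⊥_j = 0` for `1 ≤ j ≤ t`. -/
def IsDesign (q n t : ℕ) (A : ℕ → ℝ) : Prop :=
  ∀ j, 1 ≤ j → j ≤ t → ∑ i ∈ Finset.range (n+1), A i * kraw n q j i = 0

/-- `h : {0,…,n} → ℝ` is positive definite: its (unique) Krawtchouk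
coefficients are all nonnegative. -/
def PositiveDefinite (q n : ℕ) (h : ℕ → ℝ) : Prop :=
  ∃ c : ℕ → ℝ, (∀ j, j ≤ n → 0 ≤ c j) ∧
    ∀ i, i ≤ n → h i = ∑ j ∈ Finset.range (n+1), c j * kraw n q j i

open scoped Classical in
/-- The support of a quasicode: `{i > 0 : A i ≠ 0}`. -/
noncomputable def supp (n : ℕ) (A : ℕ → ℝ) : Finset ℕ :=
  (Finset.Icc 1 n).filter (fun i => A i ≠ 0)

/-- The dual quasicode (MacWilliams transform): `A^⊥_j = (1/N) ∑_i A i · K_j(i)`. -/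
noncomputable def dualQuasicode (q n : ℕ) (N : ℝ) (A : ℕ → ℝ) : ℕ → ℝ :=
  fun j => (1 / N) * ∑ i ∈ Finset.range (n+1), A i * kraw n q j i


/-!
Completely monotonic potentials on `{0, …, n}` are exactly the nonnegative combinations of the
potentials `i ↦ C(n - i, a)` (Newton's forward-difference formula for `f (n - ·)`), so a quasicode
is universally optimal iff it minimizes every binomial moment `β_a(A) = ∑ᵢ C(n - i, a) Aᵢ`.
The identity `∑ᵢ C(n - i, a) Kᵢ(x) = q^b C(n - x, b)` for `a + b = n` shows that the MacWilliams
transform exchanges binomial moments: `β_a(A^⊥) = q^b / N · β_b(A)`. As binomial moments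
determine a vector, this also yields `K² = qⁿ I`, so the transform maps quasicodes of size `N`
to quasicodes of size `qⁿ / N`, and moment-minimality passes from `A` to `A^⊥` and back.
-/

section Binomial

variable {R : Type*} [CommRing R]

theorem choose_mul_choose_sub_comm (m j a : ℕ) :
    m.choose j * (m - j).choose a = m.choose a * (m - a).choose j := by
  have hj := Nat.choose_mul (n := m) (k := j + a) (s := j) (Nat.le_add_right j a)
  have ha := Nat.choose_mul (n := m) (k := j + a) (s := a) (Nat.le_add_left a j)
  rw [Nat.add_sub_cancel_left] at hj
  rw [Nat.add_sub_cancel, ← Nat.choose_symm_add] at ha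
  rw [← hj, ← ha]

theorem sum_range_pow_mul_choose_of_le (c : R) {m M : ℕ} (hm : m ≤ M) :
    ∑ j ∈ range (M + 1), c ^ j * m.choose j = (c + 1) ^ m := by
  rw [add_pow, ← sum_subset (range_subset_range.2 (by omega : m + 1 ≤ M + 1))]
  · simp
  · intro j _ hj
    simp [Nat.choose_eq_zero_of_lt (by simpa using hj : m < j)]

theorem sum_range_pow_mul_choose_mul_choose_sub (c : R) {m M : ℕ} (hm : m ≤ M) (a : ℕ) :
    ∑ j ∈ range (M + 1), c ^ j * m.choose j * (m - j).choose a
      = m.choose a * (c + 1) ^ (m - a) := by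
  rw [← sum_range_pow_mul_choose_of_le c (hm.trans' (Nat.sub_le m a)), mul_sum]
  refine sum_congr rfl fun j _ => ?_
  rw [mul_assoc, ← Nat.cast_mul, choose_mul_choose_sub_comm, Nat.cast_mul]
  ring

theorem choose_mul_zero_pow_sub (m a : ℕ) :
    (m.choose a : R) * 0 ^ (m - a) = if a = m then 1 else 0 := by
  rcases lt_trichotomy a m with h | rfl | h
  · simp [h.ne, zero_pow (Nat.sub_ne_zero_of_lt h)]
  · simp
  · simp [h.ne', Nat.choose_eq_zero_of_lt h]

end Binomial

theorem sum_range_diag_eq_sum_range_range {M : Type*} [AddCommMonoid M] {n : ℕ}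
    (u : ℕ → ℕ → M) (hu : ∀ j l, n < j + l → u j l = 0) :
    ∑ i ∈ range (n + 1), ∑ j ∈ range (i + 1), u j (i - j)
      = ∑ j ∈ range (n + 1), ∑ l ∈ range (n + 1), u j l := by
  rw [sum_range_diag_flip]
  refine sum_congr rfl fun j hj => sum_subset (range_subset_range.2 (by omega)) ?_
  intro l _ hl
  exact hu j l (by simp at hj hl; omega)

noncomputable def binomialMoment (n a : ℕ) (A : ℕ → ℝ) : ℝ :=
  ∑ i ∈ range (n + 1), ((n - i).choose a : ℝ) * A i

theorem binomialMoment_kraw_eq_sum_antidiagonal {q n a x : ℕ} (hx : x ≤ n) :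
    binomialMoment n a (fun i => kraw n q i x)
      = ∑ p ∈ antidiagonal a,
          (∑ j ∈ range (n + 1), (-1 : ℝ) ^ j * x.choose j * (x - j).choose p.1)
            * ∑ l ∈ range (n + 1), ((q : ℝ) - 1) ^ l * (n - x).choose l
                * (n - x - l).choose p.2 := by
  have hsupp : ∀ j l, (-1 : ℝ) ^ j * x.choose j * (((q : ℝ) - 1) ^ l * (n - x).choose l) = 0 ∨
      (j ≤ x ∧ l ≤ n - x) := by
    intro j l
    by_cases hj : j ≤ x
    · by_cases hl : l ≤ n - x
      · exact Or.inr ⟨hj, hl⟩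
      · simp [Nat.choose_eq_zero_of_lt (not_le.1 hl)]
    · simp [Nat.choose_eq_zero_of_lt (not_le.1 hj)]
  have hvandermonde : ∀ j l,
      (-1 : ℝ) ^ j * x.choose j * (((q : ℝ) - 1) ^ l * (n - x).choose l) * (n - j - l).choose a
        = ∑ p ∈ antidiagonal a, (-1 : ℝ) ^ j * x.choose j * (x - j).choose p.1
            * (((q : ℝ) - 1) ^ l * (n - x).choose l * (n - x - l).choose p.2) := by
    intro j l
    trans (-1 : ℝ) ^ j * x.choose j * (((q : ℝ) - 1) ^ l * (n - x).choose l)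
      * ∑ p ∈ antidiagonal a, ((x - j).choose p.1 : ℝ) * (n - x - l).choose p.2
    · rcases hsupp j l with h | ⟨hj, hl⟩
      · rw [h, zero_mul, zero_mul]
      · rw [show n - j - l = (x - j) + (n - x - l) by omega, Nat.add_choose_eq]
        push_cast
        rfl
    · rw [mul_sum]
      exact sum_congr rfl fun p _ => by ring
  calc binomialMoment n a (fun i => kraw n q i x)
      = ∑ j ∈ range (n + 1), ∑ l ∈ range (n + 1),
          (-1 : ℝ) ^ j * x.choose j * (((q : ℝ) - 1) ^ l * (n - x).choose l)
            * (n - j - l).choose a := by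
        rw [binomialMoment, ← sum_range_diag_eq_sum_range_range]
        · refine sum_congr rfl fun i _ => ?_
          rw [kraw, mul_sum]
          refine sum_congr rfl fun j hj => ?_
          rw [show n - j - (i - j) = n - i by simp at hj; omega]
          ring
        · intro j l hjl
          rcases hsupp j l with h | ⟨hj, hl⟩
          · rw [h, zero_mul]
          · omega
    _ = _ := by
        simp_rw [hvandermonde, sum_mul_sum]
        exact (sum_congr rfl fun j _ => sum_comm).trans sum_comm

theorem binomialMoment_kraw {q n a b x : ℕ} (hab : a + b = n) (hx : x ≤ n) :
    binomialMoment n a (fun i => kraw n q i x) = (q : ℝ) ^ b * (n - x).choose b := by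
  calc binomialMoment n a (fun i => kraw n q i x)
      = ∑ p ∈ antidiagonal a,
          (if p.1 = x then 1 else 0) * ((n - x).choose p.2 * (q : ℝ) ^ (n - x - p.2)) := by
        rw [binomialMoment_kraw_eq_sum_antidiagonal hx]
        refine sum_congr rfl fun p _ => ?_
        rw [sum_range_pow_mul_choose_mul_choose_sub _ hx,
          sum_range_pow_mul_choose_mul_choose_sub _ (Nat.sub_le n x), neg_add_cancel,
          choose_mul_zero_pow_sub, sub_add_cancel]
    _ = (q : ℝ) ^ b * (n - x).choose b := by
        rw [Nat.sum_antidiagonal_eq_sum_range_succ_mk]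
        simp only [ite_mul, one_mul, zero_mul, sum_ite_eq', mem_range]
        split_ifs with h
        · rw [Nat.choose_symm_of_eq_add (by omega : n - x = (a - x) + b),
            show n - x - (a - x) = b by omega, mul_comm]
        · rw [Nat.choose_eq_zero_of_lt (by omega : n - x < b), Nat.cast_zero, mul_zero]

theorem binomialMoment_const_mul (n a : ℕ) (c : ℝ) (A : ℕ → ℝ) :
    binomialMoment n a (fun i => c * A i) = c * binomialMoment n a A := by
  simp only [binomialMoment, mul_sum]
  exact sum_congr rfl fun i _ => by ring

theorem binomialMoment_zero (n : ℕ) (A : ℕ → ℝ) :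
    binomialMoment n 0 A = ∑ i ∈ range (n + 1), A i := by
  simp [binomialMoment]

theorem binomialMoment_self (n : ℕ) (A : ℕ → ℝ) : binomialMoment n n A = A 0 := by
  rw [binomialMoment, sum_eq_single 0]
  · simp
  · intro i hi hi0
    rw [mem_range] at hi
    rw [Nat.choose_eq_zero_of_lt (by omega : n - i < n), Nat.cast_zero, zero_mul]
  · simp

theorem eq_zero_of_binomialMoment_eq_zero {n : ℕ} {w : ℕ → ℝ}
    (hw : ∀ a ≤ n, binomialMoment n a w = 0) : ∀ i ≤ n, w i = 0 := by
  intro i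
  induction i using Nat.strong_induction_on with
  | _ i ih =>
    intro hi
    -- the moment of order `n - i` sees only `w 0, …, w i`, and `w i` with coefficient `1`
    have h := hw (n - i) (Nat.sub_le n i)
    rwa [binomialMoment, sum_eq_single i, Nat.choose_self, Nat.cast_one, one_mul] at h
    · intro j hj hji
      rw [mem_range] at hj
      rcases lt_or_gt_of_ne hji with hlt | hgt
      · rw [ih j hlt (by omega), mul_zero]
      · rw [Nat.choose_eq_zero_of_lt (by omega : n - j < n - i), Nat.cast_zero, zero_mul]
    · simp; omega

theorem eq_of_binomialMoment_eq {n : ℕ} {u v : ℕ → ℝ}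
    (h : ∀ a ≤ n, binomialMoment n a u = binomialMoment n a v) : ∀ i ≤ n, u i = v i := by
  have hw : ∀ a ≤ n, binomialMoment n a (fun i => u i - v i) = 0 := by
    intro a ha
    simp only [binomialMoment, mul_sub, sum_sub_distrib]
    exact sub_eq_zero.2 (h a ha)
  exact fun i hi => sub_eq_zero.1 (eq_zero_of_binomialMoment_eq_zero hw i hi)

theorem binomialMoment_sum_mul_kraw {q n a b : ℕ} (hab : a + b = n) (A : ℕ → ℝ) :
    binomialMoment n a (fun j => ∑ i ∈ range (n + 1), A i * kraw n q j i)
      = (q : ℝ) ^ b * binomialMoment n b A := by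
  simp only [binomialMoment, mul_sum]
  rw [sum_comm]
  refine sum_congr rfl fun i hi => ?_
  have hkraw := binomialMoment_kraw (q := q) hab (x := i) (by simp at hi; omega)
  rw [binomialMoment] at hkraw
  calc ∑ j ∈ range (n + 1), ((n - j).choose a : ℝ) * (A i * kraw n q j i)
      = A i * ∑ j ∈ range (n + 1), ((n - j).choose a : ℝ) * kraw n q j i := by
        rw [mul_sum]
        exact sum_congr rfl fun j _ => by ring
    _ = (q : ℝ) ^ b * ((n - i).choose b * A i) := by
        rw [hkraw]
        ring

theorem binomialMoment_dualQuasicode {q n a b : ℕ} (hab : a + b = n) (N : ℝ) (A : ℕ → ℝ) :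
    binomialMoment n a (dualQuasicode q n N A) = (q : ℝ) ^ b / N * binomialMoment n b A := by
  rw [show dualQuasicode q n N A = fun j => 1 / N * ∑ i ∈ range (n + 1), A i * kraw n q j i
    from rfl, binomialMoment_const_mul, binomialMoment_sum_mul_kraw hab]
  ring

theorem sum_dualQuasicode_mul_kraw {q n j : ℕ} (hj : j ≤ n) (N : ℝ) (A : ℕ → ℝ) :
    ∑ i ∈ range (n + 1), dualQuasicode q n N A i * kraw n q j i = (q : ℝ) ^ n / N * A j := by
  refine eq_of_binomialMoment_eq
    (u := fun j => ∑ i ∈ range (n + 1), dualQuasicode q n N A i * kraw n q j i)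
    (v := fun j => (q : ℝ) ^ n / N * A j) (fun a ha => ?_) j hj
  rw [binomialMoment_sum_mul_kraw (Nat.add_sub_of_le ha),
    binomialMoment_dualQuasicode (by omega : n - a + a = n), binomialMoment_const_mul,
    ← mul_assoc, mul_div_assoc', ← pow_add, Nat.sub_add_cancel ha]

theorem IsQuasicode.one_le_size {q n : ℕ} {N : ℝ} {A : ℕ → ℝ} (hA : IsQuasicode q n N A) :
    1 ≤ N := by
  rw [← hA.size, ← hA.zeroth]
  exact single_le_sum (fun i hi => hA.nonneg i (by simp at hi; omega)) (by simp)

theorem IsQuasicode.dual {q n : ℕ} {N : ℝ} {A : ℕ → ℝ} (hA : IsQuasicode q n N A) :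
    IsQuasicode q n ((q : ℝ) ^ n / N) (dualQuasicode q n N A) := by
  have hN : 0 < N := zero_lt_one.trans_le hA.one_le_size
  refine ⟨fun j hj => ?_, fun j hj => ?_, ?_, ?_⟩
  · exact mul_nonneg (by positivity) (hA.delsarte j hj)
  · rw [sum_dualQuasicode_mul_kraw hj]
    exact mul_nonneg (by positivity) (hA.nonneg j hj)
  · rw [← binomialMoment_zero, binomialMoment_dualQuasicode (zero_add n), binomialMoment_self,
      hA.zeroth, mul_one]
  · simp only [dualQuasicode, kraw, zero_add, range_one, sum_singleton]
    simp [hA.size, hN.ne']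

theorem fdiff_iterate_comp_sub {n k s : ℕ} (f : ℕ → ℝ) (h : s + k ≤ n) :
    fdiff^[k] (fun t => f (n - t)) s = (-1) ^ k * fdiff^[k] f (n - s - k) := by
  induction k generalizing s with
  | zero => simp
  | succ k ih =>
    rw [Function.iterate_succ_apply', Function.iterate_succ_apply']
    show fdiff^[k] _ (s + 1) - fdiff^[k] _ s
      = (-1) ^ (k + 1) * (fdiff^[k] f (n - s - (k + 1) + 1) - fdiff^[k] f (n - s - (k + 1)))
    rw [ih (by omega), ih (by omega), show n - (s + 1) - k = n - s - (k + 1) by omega,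
      show n - s - (k + 1) + 1 = n - s - k by omega]
    ring

theorem fdiff_eq_fwdDiff : fdiff = fwdDiff 1 := rfl

theorem eq_sum_choose_mul_fdiff_iterate (f : ℕ → ℝ) (s : ℕ) :
    f s = ∑ k ∈ range (s + 1), (s.choose k : ℝ) * fdiff^[k] f 0 := by
  simpa [fdiff_eq_fwdDiff] using shift_eq_sum_fwdDiff_iter 1 f s 0

theorem CompletelyMonotonicOn.exists_eq_sum_mul_choose {f : ℕ → ℝ} {n : ℕ}
    (hf : CompletelyMonotonicOn f 0 n) :
    ∃ c : ℕ → ℝ, (∀ k ≤ n, 0 ≤ c k) ∧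
      ∀ i ≤ n, f i = ∑ k ∈ range (n + 1), c k * (n - i).choose k := by
  refine ⟨fun k => (-1) ^ k * fdiff^[k] f (n - k),
    fun k hk => hf k (n - k) (Nat.zero_le _) (by omega), fun i hi => ?_⟩
  have hnewton := eq_sum_choose_mul_fdiff_iterate (fun t => f (n - t)) (n - i)
  rw [Nat.sub_sub_self hi] at hnewton
  rw [hnewton, ← sum_subset (range_subset_range.2 (by omega : n - i + 1 ≤ n + 1))]
  · refine sum_congr rfl fun k hk => ?_
    rw [fdiff_iterate_comp_sub f (by simp at hk; omega), Nat.sub_zero]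
    ring
  · intro k _ hk
    rw [Nat.choose_eq_zero_of_lt (by simpa using hk), Nat.cast_zero, mul_zero]

theorem CompletelyMonotonicOn.sum_mul_le_of_binomialMoment_le {f : ℕ → ℝ} {n : ℕ}
    (hf : CompletelyMonotonicOn f 0 n) {A B : ℕ → ℝ}
    (h : ∀ a ≤ n, binomialMoment n a A ≤ binomialMoment n a B) :
    ∑ i ∈ range (n + 1), f i * A i ≤ ∑ i ∈ range (n + 1), f i * B i := by
  obtain ⟨c, hc, hfc⟩ := hf.exists_eq_sum_mul_choose
  have henergy : ∀ C : ℕ → ℝ, ∑ i ∈ range (n + 1), f i * C i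
      = ∑ k ∈ range (n + 1), c k * binomialMoment n k C := by
    intro C
    simp only [binomialMoment, mul_sum]
    rw [sum_comm]
    refine sum_congr rfl fun i hi => ?_
    rw [hfc i (by simpa [Nat.lt_succ_iff] using hi), sum_mul]
    exact sum_congr rfl fun k _ => by ring
  rw [henergy, henergy]
  exact sum_le_sum fun k hk =>
    mul_le_mul_of_nonneg_left (h k (by simpa [Nat.lt_succ_iff] using hk))
      (hc k (by simpa [Nat.lt_succ_iff] using hk))

theorem fdiff_iterate_choose_nonneg (k j t : ℕ) :
    0 ≤ fdiff^[k] (fun t => (t.choose j : ℝ)) t := by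
  induction k generalizing j with
  | zero => simp
  | succ k ih =>
    rw [Function.iterate_succ_apply]
    cases j with
    | zero =>
      have hconst : fdiff (fun t => (t.choose 0 : ℝ)) = fun _ => 0 := by
        funext t
        simp [fdiff]
      rw [hconst, Function.iterate_fixed (by funext t; simp [fdiff])]
    | succ j =>
      have hpascal : fdiff (fun t => (t.choose (j + 1) : ℝ)) = fun t => (t.choose j : ℝ) := by
        funext t
        simp [fdiff, Nat.choose_succ_succ']
      rw [hpascal]
      exact ih j

theorem completelyMonotonicOn_choose_sub (n j : ℕ) :
    CompletelyMonotonicOn (fun i => ((n - i).choose j : ℝ)) 0 n := by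
  intro k i _ hik
  rw [fdiff_iterate_comp_sub (fun t => (t.choose j : ℝ)) hik, ← mul_assoc, ← mul_pow,
    neg_one_mul, neg_neg, one_pow, one_mul]
  exact fdiff_iterate_choose_nonneg k j _

theorem isUOQuasicode_iff_binomialMoment_le {q n : ℕ} {N : ℝ} {A : ℕ → ℝ} :
    IsUOQuasicode q n N A ↔ IsQuasicode q n N A ∧
      ∀ B, IsQuasicode q n N B → ∀ a ≤ n, binomialMoment n a A ≤ binomialMoment n a B :=
  and_congr_right fun _ =>
    ⟨fun h B hB a _ => h _ (completelyMonotonicOn_choose_sub n a) B hB,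
      fun h _ hf B hB => hf.sum_mul_le_of_binomialMoment_le (h B hB)⟩

theorem uo_iff_dual_uo_general {q n : ℕ} (hq : 2 ≤ q) {N : ℝ} {A : ℕ → ℝ}
    (hA : IsQuasicode q n N A) :
    IsUOQuasicode q n N A ↔
      IsUOQuasicode q n ((q : ℝ)^n / N) (dualQuasicode q n N A) := by
  have hN : 0 < N := zero_lt_one.trans_le hA.one_le_size
  have hq0 : (0 : ℝ) < q := by exact_mod_cast (by omega : 0 < q)
  have hqn : 0 < (q : ℝ) ^ n := pow_pos hq0 n
  have hMN : (q : ℝ) ^ n / ((q : ℝ) ^ n / N) = N := div_div_cancel₀ hqn.ne'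
  simp only [isUOQuasicode_iff_binomialMoment_le, hA, hA.dual, true_and]
  constructor
  · intro hopt B hB a ha
    have hscale : (q : ℝ) ^ (n - a) / N * ((q : ℝ) ^ a / ((q : ℝ) ^ n / N)) = 1 := by
      rw [div_mul_div_comm, ← pow_add, Nat.sub_add_cancel ha, mul_div_cancel₀ _ hN.ne',
        div_self hqn.ne']
    calc binomialMoment n a (dualQuasicode q n N A)
        = (q : ℝ) ^ (n - a) / N * binomialMoment n (n - a) A :=
          binomialMoment_dualQuasicode (Nat.add_sub_of_le ha) N A
      _ ≤ (q : ℝ) ^ (n - a) / N * binomialMoment n (n - a) (dualQuasicode q n (q ^ n / N) B) := by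
          gcongr
          exact hopt _ (by simpa only [hMN] using hB.dual) (n - a) (Nat.sub_le n a)
      _ = binomialMoment n a B := by
          rw [binomialMoment_dualQuasicode (Nat.sub_add_cancel ha), ← mul_assoc, hscale, one_mul]
  · intro hopt B hB a ha
    have hle := hopt _ hB.dual (n - a) (Nat.sub_le n a)
    rwa [binomialMoment_dualQuasicode (Nat.sub_add_cancel ha),
      binomialMoment_dualQuasicode (Nat.sub_add_cancel ha),
      mul_le_mul_iff_of_pos_left (by positivity)] at hle

/-- Proposition 3.4: a quasicode is universally optimal
iff its dual (which has size `qⁿ/N`) is universally optimal. -/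
theorem uo_iff_dual_uo {q n : ℕ} (hq : 2 ≤ q) (hn : 1 ≤ n) {N : ℝ} {A : ℕ → ℝ}
    (hA : IsQuasicode q n N A) :
    IsUOQuasicode q n N A ↔
      IsUOQuasicode q n ((q : ℝ)^n / N) (dualQuasicode q n N A) :=
  uo_iff_dual_uo_general hq hA
end

section
/- Let q ≥ 2, n ≥ 1, and 0 ≤ j ≤ n. Then the function h : {0,1,…,n} → ℝ given by h(x) = (n−j+1 − x)(n−j+2 − x)⋯(n − x) is positive definite with respect to the Krawtchouk expansion for parameters n and q. -/
/-!
Homogenizing the generating function `∑ₖ Kₖ(x) zᵏ = (1 - z)ˣ (1 + (q - 1) z)ⁿ⁻ˣ` and evaluating it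
at `(z, 1 + z)` gives `∑ₖ Kₖ(x) zᵏ (1 + z)ⁿ⁻ᵏ = (1 + q z)ⁿ⁻ˣ`. Comparing coefficients of `zʲ` yields
`∑ₖ C(n - k, n - j) Kₖ(x) = qʲ C(n - x, j)`, while `h(x) = j! C(n - x, j)`; so the Krawtchouk
coefficients of `h` are `j! q⁻ʲ C(n - k, n - j) ≥ 0`.
-/

open Finset

open Polynomial
open scoped Nat

lemma coeff_C_mul_X_add_one_pow {R : Type*} [CommSemiring R] (r : R) (s t : ℕ) :
    ((C r * X + 1) ^ s).coeff t = r ^ t * s.choose t := by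
  simp only [add_pow, one_pow, mul_one, mul_pow, ← C_pow, finsetSum_coeff, ← C_eq_natCast,
    mul_right_comm _ (X ^ _), ← C_mul, coeff_C_mul_X_pow]
  rw [Finset.sum_ite_eq]
  split_ifs with h
  · rfl
  · rw [Nat.choose_eq_zero_of_lt (by simpa using h), Nat.cast_zero, mul_zero]

lemma homogenize_pow {R : Type*} [CommSemiring R] {p : R[X]} {d : ℕ} (hp : p.natDegree ≤ d)
    (m : ℕ) : (p ^ m).homogenize (m * d) = p.homogenize d ^ m := by
  induction m with
  | zero => simp
  | succ m ih =>
    rw [pow_succ, add_one_mul, homogenize_mul _ _ (natDegree_pow_le_of_le m hp) hp, ih, pow_succ]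

lemma aeval_homogenize {R A : Type*} [CommSemiring R] [CommSemiring A] [Algebra R A]
    {p : R[X]} {n : ℕ} (hp : p.natDegree ≤ n) (a b : A) :
    MvPolynomial.aeval ![a, b] (p.homogenize n) =
      ∑ k ∈ Finset.range (n + 1), p.coeff k • (a ^ k * b ^ (n - k)) := by
  conv_lhs => rw [p.as_sum_range' (n + 1) (Nat.lt_succ_of_le hp)]
  simp only [homogenize_finsetSum, ← C_mul_X_pow_eq_monomial, homogenize_C_mul, map_sum]
  refine Finset.sum_congr rfl fun k hk => ?_
  rw [homogenize_X_pow (Nat.lt_succ_iff.mp (Finset.mem_range.mp hk))]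
  simp [Algebra.smul_def]

noncomputable def krawGenFun (n q x : ℕ) : ℝ[X] :=
  (C (-1) * X + 1) ^ x * (C ((q : ℝ) - 1) * X + 1) ^ (n - x)

lemma coeff_krawGenFun (n q x k : ℕ) : (krawGenFun n q x).coeff k = kraw n q k x := by
  rw [krawGenFun, coeff_mul, Finset.Nat.sum_antidiagonal_eq_sum_range_succ_mk, kraw]
  refine Finset.sum_congr rfl fun j _ => ?_
  simp only [coeff_C_mul_X_add_one_pow]
  ring

lemma sum_kraw_smul_pow_mul_pow {A : Type*} [CommRing A] [Algebra ℝ A] {n q x : ℕ} (hx : x ≤ n)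
    (a b : A) :
    ∑ k ∈ Finset.range (n + 1), kraw n q k x • (a ^ k * b ^ (n - k)) =
      (b - a) ^ x * (b + ((q : A) - 1) * a) ^ (n - x) := by
  obtain ⟨m, rfl⟩ := Nat.exists_eq_add_of_le hx
  have hlin (r : ℝ) : (C r * X + 1).natDegree ≤ 1 := natDegree_linear_le
  have hpow (r : ℝ) (e : ℕ) : ((C r * X + 1) ^ e).natDegree ≤ e := by
    simpa using natDegree_pow_le_of_le e (hlin r)
  have hhom (r : ℝ) (e : ℕ) : ((C r * X + 1) ^ e).homogenize e = (.C r * .X 0 + .X 1) ^ e := by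
    simpa using homogenize_pow (hlin r) e
  have hdeg : (krawGenFun (x + m) q x).natDegree ≤ x + m := by
    rw [krawGenFun, add_tsub_cancel_left]
    exact natDegree_mul_le_of_le (hpow _ _) (hpow _ _)
  simp only [← coeff_krawGenFun, add_tsub_cancel_left]
  rw [← aeval_homogenize hdeg, krawGenFun, add_tsub_cancel_left,
    homogenize_mul _ _ (hpow _ _) (hpow _ _), hhom, hhom]
  simp only [map_mul, map_add, map_pow, map_neg, map_one, map_sub, map_natCast,
    MvPolynomial.aeval_X, Matrix.cons_val_zero, Matrix.cons_val_one,
    Matrix.cons_val_fin_one]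
  ring

lemma sum_choose_mul_kraw {n q j x : ℕ} (hj : j ≤ n) (hx : x ≤ n) :
    ∑ k ∈ Finset.range (n + 1), ((n - k).choose (n - j) : ℝ) * kraw n q k x =
      (q : ℝ) ^ j * (n - x).choose j := by
  have h := congrArg (coeff · j) (sum_kraw_smul_pow_mul_pow (q := q) hx (X : ℝ[X]) (1 + X))
  have hrhs : ((1 + X - X) ^ x * (1 + X + ((q : ℝ[X]) - 1) * X) ^ (n - x) : ℝ[X]) =
      (C (q : ℝ) * X + 1) ^ (n - x) := by
    rw [← C_eq_natCast]
    ring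
  simp only [hrhs, coeff_C_mul_X_add_one_pow, finsetSum_coeff, coeff_smul, smul_eq_mul,
    coeff_X_pow_mul', coeff_one_add_X_pow] at h
  rw [← h]
  refine Finset.sum_congr rfl fun k hk => ?_
  rw [Finset.mem_range] at hk
  rw [mul_comm]
  congr 1
  split_ifs with hkj
  · rw [Nat.choose_symm_of_eq_add]
    omega
  · rw [Nat.choose_eq_zero_of_lt (by omega), Nat.cast_zero]

lemma prod_range_sub_add_eq_descFactorial {R : Type*} [CommRing R] (m j : ℕ) :
    ∏ t ∈ Finset.range j, ((m : R) - j + 1 + t) = m.descFactorial j := by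
  calc ∏ t ∈ Finset.range j, ((m : R) - j + 1 + t)
      = ∏ t ∈ Finset.range j, ((m : R) - (j - 1 - t : ℕ)) := by
        refine Finset.prod_congr rfl fun t ht => ?_
        rw [Finset.mem_range] at ht
        rw [Nat.sub_sub, Nat.cast_sub (by omega)]
        push_cast
        ring
    _ = ∏ t ∈ Finset.range j, ((m : R) - t) := Finset.prod_range_reflect (fun t => (m : R) - t) j
    _ = m.descFactorial j := by
        rw [← descPochhammer_eval_eq_prod_range, descPochhammer_eval_eq_descFactorial]

theorem falling_factorial_positiveDefinite_general {q n j : ℕ} (hq : 2 ≤ q)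
    (hj : j ≤ n) :
    PositiveDefinite q n
      (fun x => ∏ i ∈ Finset.range j, ((n : ℝ) - (j : ℝ) + 1 + (i : ℝ) - (x : ℝ))) := by
  have hqj : (q : ℝ) ^ j ≠ 0 := pow_ne_zero _ (by positivity)
  refine ⟨fun k => j ! / (q : ℝ) ^ j * (n - k).choose (n - j), fun k _ => by positivity,
    fun x hx => ?_⟩
  have hprod : ∏ i ∈ Finset.range j, ((n : ℝ) - j + 1 + i - x) =
      ∏ i ∈ Finset.range j, (((n - x : ℕ) : ℝ) - j + 1 + i) :=
    Finset.prod_congr rfl fun i _ => by rw [Nat.cast_sub hx]; ring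
  dsimp only
  rw [hprod, prod_range_sub_add_eq_descFactorial, Nat.descFactorial_eq_factorial_mul_choose,
    Nat.cast_mul]
  simp only [mul_assoc, ← Finset.mul_sum, sum_choose_mul_kraw hj hx]
  field_simp

/-- Lemma 4.6: for `0 ≤ j ≤ n`, the function
`h(x) = (n−j+1 − x)(n−j+2 − x)⋯(n − x)` is positive definite. -/
theorem falling_factorial_positiveDefinite {q n j : ℕ} (hq : 2 ≤ q) (hn : 1 ≤ n)
    (hj : j ≤ n) :
    PositiveDefinite q n
      (fun x => ∏ i ∈ Finset.range j, ((n : ℝ) - (j : ℝ) + 1 + (i : ℝ) - (x : ℝ))) :=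
  falling_factorial_positiveDefinite_general hq hj
end

section
/- Let f : {0,1,…,n} → ℝ be completely monotonic, let a_1, …, a_r be distinct elements of {0,1,…,n}, and let p be the unique real polynomial of degree less than r such that p(a_i) = f(a_i) for i = 1,…,r. Then (f(x) − p(x)) · Π_{i=1}^r (a_i − x) ≥ 0 for all x ∈ {0,1,…,n}. -/
/-!
Write `[T]f` for the divided difference of `f` over a node set `T`, and let `T = A ∪ {x}` with
`A` the interpolation nodes. Since `deg p < r = |T| - 1` we have `[T]p = 0`, and `f - p` vanishes
on `A`, so `f x - p x = [T]f · ∏_{y ∈ A} (x - y)`. Complete monotonicity gives `[T]f` the sign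
`(-1)^r`: on consecutive nodes `[T]f = Δ^r f / r!`, and if `T` has a gap `u` strictly between its
extreme nodes, then `[T]f` is a convex combination of the divided differences over `T ∪ {u}`
without its least resp. greatest node, which span a shorter interval.
-/

open Finset

noncomputable def divDiff (f : ℕ → ℝ) (s : Finset ℕ) : ℝ :=
  ∑ x ∈ s, f x / ∏ y ∈ s.erase x, ((x : ℝ) - y)

section divDiff

variable {f : ℕ → ℝ} {s : Finset ℕ}

@[simp]
lemma divDiff_empty (f : ℕ → ℝ) : divDiff f ∅ = 0 := by
  simp [divDiff]

@[simp]
lemma divDiff_singleton (f : ℕ → ℝ) (a : ℕ) : divDiff f {a} = f a := by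
  simp [divDiff]

lemma divDiff_sub (f g : ℕ → ℝ) (s : Finset ℕ) :
    divDiff (fun m => f m - g m) s = divDiff f s - divDiff g s := by
  simp only [divDiff, sub_div, sum_sub_distrib]

lemma prod_erase_natCast_sub_ne_zero (s : Finset ℕ) (x : ℕ) :
    ∏ y ∈ s.erase x, ((x : ℝ) - y) ≠ 0 :=
  prod_ne_zero_iff.mpr fun _ hy =>
    sub_ne_zero.mpr (Nat.cast_injective.ne (ne_of_mem_erase hy).symm)

lemma divDiff_eval_eq_coeff {q : Polynomial ℝ} (hq : q.degree < #s) :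
    divDiff (fun m => q.eval (m : ℝ)) s = q.coeff (#s - 1) :=
  (Lagrange.coeff_eq_sum Nat.cast_injective.injOn hq).symm

lemma divDiff_erase {a : ℕ} (ha : a ∈ s) :
    divDiff f (s.erase a) =
      ∑ x ∈ s, f x * ((x : ℝ) - a) / ∏ y ∈ s.erase x, ((x : ℝ) - y) := by
  rw [← sum_erase (a := a) _ (by simp), divDiff]
  refine sum_congr rfl fun x hx => ?_
  have hxa : (x : ℝ) - a ≠ 0 := sub_ne_zero.mpr (Nat.cast_injective.ne (ne_of_mem_erase hx))
  have hax : a ∈ s.erase x := mem_erase.mpr ⟨(ne_of_mem_erase hx).symm, ha⟩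
  rw [← mul_prod_erase (s.erase x) (fun y => (x : ℝ) - y) hax, erase_right_comm, mul_comm (f x),
    mul_div_mul_left _ _ hxa]

lemma divDiff_erase_sub_divDiff_erase {a b : ℕ} (ha : a ∈ s) (hb : b ∈ s) :
    divDiff f (s.erase a) - divDiff f (s.erase b) = ((b : ℝ) - a) * divDiff f s := by
  rw [divDiff_erase ha, divDiff_erase hb, ← sum_sub_distrib, divDiff, mul_sum]
  refine sum_congr rfl fun x _ => ?_
  rw [div_sub_div_same, ← mul_div_assoc]
  ring_nf

lemma divDiff_Icc_eq_fdiff_iterate (f : ℕ → ℝ) (k m : ℕ) :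
    divDiff f (Icc m (m + k)) = (fdiff^[k] f) m / k.factorial := by
  induction k generalizing m with
  | zero => simp
  | succ k ih =>
    have h := divDiff_erase_sub_divDiff_erase (f := f) (left_mem_Icc.mpr (m.le_add_right (k + 1)))
      (right_mem_Icc.mpr (m.le_add_right (k + 1)))
    rw [Icc_erase_left, Icc_erase_right,
      show Ioc m (m + (k + 1)) = Icc (m + 1) (m + 1 + k) by ext; simp; omega,
      show Ico m (m + (k + 1)) = Icc m (m + k) by ext; simp; omega,
      ih, ih, div_sub_div_same] at h
    push_cast at h
    have hΔ : (fdiff^[k + 1] f) m = (fdiff^[k] f) (m + 1) - (fdiff^[k] f) m := by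
      rw [Function.iterate_succ_apply']; rfl
    rw [Nat.factorial_succ, Nat.cast_mul, mul_comm, ← div_div, hΔ, h]
    push_cast
    field_simp
    ring

lemma sub_mul_divDiff_eq_of_notMem {a b u : ℕ} (ha : a ∈ s) (hb : b ∈ s) (hu : u ∉ s) :
    ((b : ℝ) - a) * divDiff f s =
      ((b : ℝ) - u) * divDiff f ((insert u s).erase a) +
        ((u : ℝ) - a) * divDiff f ((insert u s).erase b) := by
  have hua := divDiff_erase_sub_divDiff_erase (f := f) (mem_insert_of_mem ha) (mem_insert_self u s)
  have hbu := divDiff_erase_sub_divDiff_erase (f := f) (mem_insert_self u s) (mem_insert_of_mem hb)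
  rw [erase_insert hu] at hua hbu
  linear_combination (-((b : ℝ) - u)) * hua + ((u : ℝ) - a) * hbu

lemma neg_one_pow_mul_divDiff_nonneg_of_notMem {k a b u : ℕ} (ha : a ∈ s) (hb : b ∈ s)
    (hu : u ∉ s) (hau : a < u) (hub : u < b)
    (h₁ : 0 ≤ (-1 : ℝ) ^ k * divDiff f ((insert u s).erase a))
    (h₂ : 0 ≤ (-1 : ℝ) ^ k * divDiff f ((insert u s).erase b)) :
    0 ≤ (-1 : ℝ) ^ k * divDiff f s := by
  have hba : (0 : ℝ) < b - a := sub_pos.mpr (by exact_mod_cast hau.trans hub)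
  have hbu : (0 : ℝ) ≤ b - u := sub_nonneg.mpr (by exact_mod_cast hub.le)
  have hua : (0 : ℝ) ≤ u - a := sub_nonneg.mpr (by exact_mod_cast hau.le)
  refine (mul_nonneg_iff_of_pos_left hba).mp ?_
  linear_combination -(-1 : ℝ) ^ k * sub_mul_divDiff_eq_of_notMem (f := f) ha hb hu +
    add_nonneg (mul_nonneg hbu h₁) (mul_nonneg hua h₂)

lemma CompletelyMonotonicOn.neg_one_pow_mul_divDiff_nonneg_of_subset_Icc {n d c : ℕ}
    (hf : CompletelyMonotonicOn f 0 n) (hmd : c + d ≤ n) (hsub : s ⊆ Icc c (c + d)) :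
    0 ≤ (-1 : ℝ) ^ (#s - 1) * divDiff f s := by
  induction d using Nat.strong_induction_on generalizing s c with
  | _ d ih =>
  rcases s.eq_empty_or_nonempty with rfl | ⟨y, hy⟩
  · simp
  have hy' := mem_Icc.mp (hsub hy)
  by_cases hm : c ∈ s
  swap
  · have := ne_of_mem_of_not_mem hy hm
    refine ih (d - 1) (by omega) (c := c + 1) (by omega) fun z hz => ?_
    have := mem_Icc.mp (hsub hz); have := ne_of_mem_of_not_mem hz hm
    simp; omega
  by_cases hM : c + d ∈ s
  swap
  · have := ne_of_mem_of_not_mem hy hM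
    refine ih (d - 1) (by omega) (c := c) (by omega) fun z hz => ?_
    have := mem_Icc.mp (hsub hz); have := ne_of_mem_of_not_mem hz hM
    simp; omega
  by_cases hfull : s = Icc c (c + d)
  · subst hfull
    rw [divDiff_Icc_eq_fdiff_iterate, Nat.card_Icc, show c + d + 1 - c - 1 = d by omega,
      mul_div_assoc']
    exact div_nonneg (hf d c c.zero_le hmd) (Nat.cast_nonneg _)
  obtain ⟨u, hu, hus⟩ := not_subset.mp fun h => hfull (hsub.antisymm h)
  have hum : c < u := lt_of_le_of_ne (mem_Icc.mp hu).1 (ne_of_mem_of_not_mem hm hus)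
  have huM : u < c + d := lt_of_le_of_ne (mem_Icc.mp hu).2 (ne_of_mem_of_not_mem hM hus).symm
  have hins z (hz : z ∈ insert u s) : c ≤ z ∧ z ≤ c + d :=
    mem_Icc.mp (insert_subset hu hsub hz)
  have hcard (b : ℕ) (hb : b ∈ s) : #((insert u s).erase b) = #s := by
    rw [card_erase_of_mem (mem_insert_of_mem hb), card_insert_of_notMem hus, Nat.add_sub_cancel]
  refine neg_one_pow_mul_divDiff_nonneg_of_notMem hm hM hus hum huM ?_ ?_
  · rw [← hcard c hm]
    refine ih (d - 1) (by omega) (c := c + 1) (by omega) fun z hz => ?_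
    have := hins z (mem_of_mem_erase hz); have := ne_of_mem_erase hz
    simp; omega
  · rw [← hcard (c + d) hM]
    refine ih (d - 1) (by omega) (c := c) (by omega) fun z hz => ?_
    have := hins z (mem_of_mem_erase hz); have := ne_of_mem_erase hz
    simp; omega

lemma CompletelyMonotonicOn.neg_one_pow_mul_divDiff_nonneg {n : ℕ}
    (hf : CompletelyMonotonicOn f 0 n) (hs : ∀ y ∈ s, y ≤ n) :
    0 ≤ (-1 : ℝ) ^ (#s - 1) * divDiff f s :=
  hf.neg_one_pow_mul_divDiff_nonneg_of_subset_Icc (c := 0) (zero_add n).le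
    fun y hy => mem_Icc.mpr ⟨y.zero_le, by simpa using hs y hy⟩

lemma sub_eval_eq_divDiff_insert_mul_prod {q : Polynomial ℝ} {A : Finset ℕ} {x : ℕ}
    (hx : x ∉ A) (hdeg : q.degree < #A) (hq : ∀ y ∈ A, q.eval (y : ℝ) = f y) :
    f x - q.eval (x : ℝ) = divDiff f (insert x A) * ∏ y ∈ A, ((x : ℝ) - y) := by
  have hfq : divDiff (fun m => f m - q.eval (m : ℝ)) (insert x A) =
      (f x - q.eval (x : ℝ)) / ∏ y ∈ A, ((x : ℝ) - y) := by
    rw [divDiff, sum_eq_single_of_mem x (mem_insert_self x A), erase_insert hx]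
    intro y hy hyx
    rw [hq y (mem_of_mem_insert_of_ne hy hyx), sub_self, zero_div]
  have hq0 : divDiff (fun m => q.eval (m : ℝ)) (insert x A) = 0 := by
    rw [divDiff_eval_eq_coeff, card_insert_of_notMem hx, Nat.add_sub_cancel]
    · exact Polynomial.coeff_eq_zero_of_degree_lt hdeg
    · rw [card_insert_of_notMem hx]
      exact hdeg.trans (WithBot.coe_lt_coe.mpr A.card.lt_succ_self)
  rw [divDiff_sub, hq0, sub_zero] at hfq
  rw [hfq, div_mul_cancel₀]
  simpa [erase_insert hx] using prod_erase_natCast_sub_ne_zero (insert x A) x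

end divDiff

/-- Lemma 4.9, inequality (13): if `f` is completely
monotonic on `{0,…,n}`, the `a i` (for `i < r`) are distinct elements of
`{0,…,n}`, and `p` is the polynomial of degree `< r` interpolating `f` at
the `a i`, then `(f(x) − p(x)) · ∏_{i} (a_i − x) ≥ 0` on `{0,…,n}`. -/
theorem interpolation_inequality {n r : ℕ} (f : ℕ → ℝ)
    (hf : CompletelyMonotonicOn f 0 n)
    (a : ℕ → ℕ) (ha : ∀ i, i < r → a i ≤ n)
    (hinj : ∀ i, i < r → ∀ j, j < r → a i = a j → i = j)
    (p : Polynomial ℝ) (hdeg : p.degree < (r : WithBot ℕ))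
    (hp : ∀ i, i < r → p.eval ((a i : ℝ)) = f (a i)) :
    ∀ x, x ≤ n →
      0 ≤ (f x - p.eval (x : ℝ)) * ∏ i ∈ Finset.range r, ((a i : ℝ) - (x : ℝ)) := by
  intro x hx
  have hinjOn : Set.InjOn a (range r) := fun i hi j hj =>
    hinj i (by simpa using hi) j (by simpa using hj)
  set A := (range r).image a
  have hcard : #A = r := by rw [card_image_of_injOn hinjOn, card_range]
  have hpA : ∀ y ∈ A, p.eval (y : ℝ) = f y := by
    simp only [A, mem_image, mem_range]
    rintro _ ⟨i, hi, rfl⟩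
    exact hp i hi
  by_cases hxA : x ∈ A
  · rw [← hpA x hxA, sub_self, zero_mul]
  have hsign : 0 ≤ (-1 : ℝ) ^ r * divDiff f (insert x A) := by
    have hT : ∀ y ∈ insert x A, y ≤ n := by
      simp only [A, mem_insert, mem_image, mem_range]
      rintro _ (rfl | ⟨i, hi, rfl⟩)
      exacts [hx, ha i hi]
    simpa [card_insert_of_notMem hxA, hcard] using hf.neg_one_pow_mul_divDiff_nonneg hT
  have hprod : ∏ y ∈ A, ((x : ℝ) - y) = (-1) ^ r * ∏ i ∈ range r, ((a i : ℝ) - x) := by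
    have := prod_neg (s := range r) fun i => (a i : ℝ) - x
    rw [card_range] at this
    simp only [A, prod_image hinjOn, ← this, neg_sub]
  rw [sub_eval_eq_divDiff_insert_mul_prod hxA (hcard ▸ hdeg) hpA, hprod]
  linear_combination mul_nonneg hsign (mul_self_nonneg (∏ i ∈ range r, ((a i : ℝ) - x)))
end

section
/- Let f : {0,1,…,n} → ℝ be completely monotonic, let a_1, …, a_r be distinct elements of {0,1,…,n}, and let p be the unique real polynomial of degree less than r such that p(a_i) = f(a_i) for i = 1,…,r. Then p admits an expansion p(x) = Σ_{j=0}^{r−1} c_j Π_{i=1}^{j} (a_i − x) in which all coefficients c_0, c_1, …, c_{r−1} are nonnegative. -/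
open Finset

/-!
Newton's form of the interpolating polynomial gives `c_j = (-1)^j [a_0, …, a_j] f`, so it
suffices that `(-1)^k [x_0, …, x_k] f ≥ 0` for any `k + 1` distinct nodes in `{0, …, n}`. On
consecutive nodes this is `(-1)^k Δ^k f(x_0) / k!`. Otherwise there is a gap `y ∉ s` strictly
between the extreme nodes `m < M` of `s`, and the recurrence for divided differences gives
`(M - m) [s] = (M - y) [s ∪ {y} \ {m}] + (y - m) [s ∪ {y} \ {M}]` (with `[t]` the divided
difference of `f` on the nodes `t`): a nonnegative combination of divided differences on the
same number of nodes lying in shorter intervals.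
-/

open Polynomial Lagrange

section DividedDifference

variable {F ι : Type*} [Field F] [DecidableEq ι] {s : Finset ι} {v : ι → F}

noncomputable def dividedDiff (s : Finset ι) (v r : ι → F) : F :=
  ∑ i ∈ s, r i / ∏ j ∈ s.erase i, (v i - v j)

theorem dividedDiff_erase (r : ι → F) (hvs : Set.InjOn v s) {u : ι} (hu : u ∈ s) :
    dividedDiff (s.erase u) v r
      = ∑ i ∈ s, (v i - v u) * (r i / ∏ j ∈ s.erase i, (v i - v j)) := by
  rw [← add_sum_erase _ _ hu, sub_self, zero_mul, zero_add, dividedDiff]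
  refine sum_congr rfl fun i hi => ?_
  obtain ⟨hiu, his⟩ := mem_erase.mp hi
  have hvu : v i - v u ≠ 0 := sub_ne_zero.mpr fun h => hiu (hvs his hu h)
  rw [erase_right_comm, ← mul_prod_erase _ _ (mem_erase.mpr ⟨hiu.symm, hu⟩),
    mul_div_assoc', mul_div_mul_left _ _ hvu]

theorem dividedDiff_erase_sub_erase (r : ι → F) (hvs : Set.InjOn v s) {u w : ι}
    (hu : u ∈ s) (hw : w ∈ s) :
    dividedDiff (s.erase u) v r - dividedDiff (s.erase w) v r
      = (v w - v u) * dividedDiff s v r := by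
  rw [dividedDiff_erase r hvs hu, dividedDiff_erase r hvs hw, ← sum_sub_distrib,
    dividedDiff, mul_sum]
  exact sum_congr rfl fun _ _ => by ring

theorem sub_mul_dividedDiff_erase (r : ι → F) (hvs : Set.InjOn v s) {u y w : ι}
    (hu : u ∈ s) (hy : y ∈ s) (hw : w ∈ s) :
    (v w - v u) * dividedDiff (s.erase y) v r
      = (v w - v y) * dividedDiff (s.erase u) v r
        + (v y - v u) * dividedDiff (s.erase w) v r := by
  linear_combination (v y - v w) * dividedDiff_erase_sub_erase r hvs hu hy
    + (v u - v y) * dividedDiff_erase_sub_erase r hvs hw hy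

theorem dividedDiff_image {κ : Type*} [DecidableEq κ] {g : κ → ι} {t : Finset κ}
    (hg : Set.InjOn g t) (r : ι → F) :
    dividedDiff (t.image g) v r = dividedDiff t (v ∘ g) (r ∘ g) := by
  rw [dividedDiff, sum_image hg]
  refine sum_congr rfl fun i hi => ?_
  have herase : (t.image g).erase (g i) = (t.erase i).image g := by
    ext x
    simp only [mem_erase, mem_image]
    grind [Set.InjOn]
  rw [herase, prod_image (hg.mono (coe_subset.mpr (erase_subset i t)))]
  rfl

theorem dividedDiff_eq_coeff_interpolate (r : ι → F) (hvs : Set.InjOn v s) :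
    dividedDiff s v r = (interpolate s v r).coeff (#s - 1) := by
  rw [coeff_eq_sum hvs (degree_interpolate_lt r hvs), dividedDiff]
  exact sum_congr rfl fun i hi => by rw [eval_interpolate_at_node r hvs hi]

theorem interpolate_insert (r : ι → F) {i : ι} (hi : i ∉ s)
    (hvs : Set.InjOn v ↑(insert i s)) :
    interpolate (insert i s) v r
      = interpolate s v r + C (dividedDiff (insert i s) v r) * nodal s v := by
  have hvs' : Set.InjOn v s := hvs.mono (by simp)
  have hcard : #(insert i s) = #s + 1 := card_insert_of_notMem hi
  set D := interpolate (insert i s) v r - interpolate s v r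
    - C (dividedDiff (insert i s) v r) * nodal s v
  suffices D = 0 by linear_combination this
  -- `D` vanishes on `s` and has degree `≤ #s`; its coefficient of degree `#s` cancels since the
  -- divided difference is the leading coefficient of the interpolant.
  refine eq_zero_of_degree_lt_of_eval_index_eq_zero s hvs' ?_ fun j hj => ?_
  · rw [degree_lt_iff_coeff_zero]
    intro m hm
    have hlow : (interpolate s v r).coeff m = 0 :=
      coeff_eq_zero_of_degree_lt ((degree_interpolate_lt r hvs').trans_le (by exact_mod_cast hm))
    rcases hm.eq_or_lt with rfl | hm
    · have htop : (interpolate (insert i s) v r).coeff #s = dividedDiff (insert i s) v r := by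
        rw [dividedDiff_eq_coeff_interpolate r hvs, hcard, Nat.add_sub_cancel]
      simp only [D, coeff_sub, coeff_C_mul, hlow, htop]
      rw [← natDegree_nodal (s := s) (v := v), nodal_monic.coeff_natDegree]
      ring
    · have hhigh : (interpolate (insert i s) v r).coeff m = 0 := by
        refine coeff_eq_zero_of_degree_lt ((degree_interpolate_lt r hvs).trans_le ?_)
        rw [hcard]; exact_mod_cast hm
      have hnodal : (nodal s v).coeff m = 0 :=
        coeff_eq_zero_of_natDegree_lt (by rwa [natDegree_nodal])
      simp only [D, coeff_sub, coeff_C_mul, hlow, hhigh, hnodal]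
      ring
  · simp only [D, eval_sub, eval_mul, eval_C, eval_nodal_at_node hj,
      eval_interpolate_at_node r hvs (mem_insert_of_mem hj),
      eval_interpolate_at_node r hvs' hj]
    ring

end DividedDifference

theorem interpolate_range_eq_sum_dividedDiff_mul_nodal {F : Type*} [Field F] (r : ℕ → F)
    {v : ℕ → F} {n : ℕ} (hvs : Set.InjOn v (range n)) :
    interpolate (range n) v r
      = ∑ j ∈ range n, C (dividedDiff (range (j + 1)) v r) * nodal (range j) v := by
  induction n with
  | zero => simp
  | succ n ih =>
    rw [sum_range_succ, ← ih (hvs.mono (by simp)), range_add_one,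
      interpolate_insert r notMem_range_self (by rwa [← range_add_one])]

theorem mul_dividedDiff_erase_nonneg_of_lt_of_lt {F ι : Type*} [Field F] [LinearOrder F]
    [IsStrictOrderedRing F] [DecidableEq ι] {s : Finset ι} {v r : ι → F} (hvs : Set.InjOn v s)
    {u y w : ι} (hu : u ∈ s) (hy : y ∈ s) (hw : w ∈ s) (huy : v u < v y) (hyw : v y < v w)
    {ε : F} (hsu : 0 ≤ ε * dividedDiff (s.erase u) v r)
    (hsw : 0 ≤ ε * dividedDiff (s.erase w) v r) :
    0 ≤ ε * dividedDiff (s.erase y) v r := by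
  refine nonneg_of_mul_nonneg_right ?_ (sub_pos.mpr (huy.trans hyw))
  calc 0 ≤ (v w - v y) * (ε * dividedDiff (s.erase u) v r)
        + (v y - v u) * (ε * dividedDiff (s.erase w) v r) :=
        add_nonneg (mul_nonneg (sub_nonneg.mpr hyw.le) hsu) (mul_nonneg (sub_nonneg.mpr huy.le) hsw)
    _ = (v w - v u) * (ε * dividedDiff (s.erase y) v r) := by
        linear_combination -ε * sub_mul_dividedDiff_erase r hvs hu hy hw

theorem factorial_mul_dividedDiff_Icc (f : ℕ → ℝ) (m k : ℕ) :
    (k.factorial : ℝ) * dividedDiff (Icc m (m + k)) (↑) f = (fdiff^[k] f) m := by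
  induction k generalizing m with
  | zero => simp [dividedDiff]
  | succ k ih =>
    have hrec := dividedDiff_erase_sub_erase (s := Icc m (m + k + 1)) f
      Nat.cast_injective.injOn (left_mem_Icc.mpr (by omega)) (right_mem_Icc.mpr (by omega))
    have hleft : (Icc m (m + k + 1)).erase m = Icc (m + 1) (m + 1 + k) := by
      ext; simp only [mem_erase, mem_Icc]; omega
    have hright : (Icc m (m + k + 1)).erase (m + k + 1) = Icc m (m + k) := by
      ext; simp only [mem_erase, mem_Icc]; omega
    rw [hleft, hright] at hrec
    rw [Function.iterate_succ_apply', fdiff, ← ih, ← ih, Nat.factorial_succ, Nat.cast_mul]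
    push_cast at hrec ⊢
    linear_combination -(k.factorial : ℝ) * hrec

namespace CompletelyMonotonicOn

variable {f : ℕ → ℝ} {a b : ℕ}

theorem neg_one_pow_mul_dividedDiff_Icc_nonneg (hf : CompletelyMonotonicOn f a b) {m k : ℕ}
    (ham : a ≤ m) (hmk : m + k ≤ b) :
    0 ≤ (-1) ^ k * dividedDiff (Icc m (m + k)) (↑) f := by
  have hk : (0 : ℝ) < k.factorial := by positivity
  have h := hf k m ham hmk
  rw [← factorial_mul_dividedDiff_Icc, mul_left_comm] at h
  exact nonneg_of_mul_nonneg_right h hk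

theorem neg_one_pow_mul_dividedDiff_nonneg_of_subset_Icc (hf : CompletelyMonotonicOn f a b)
    (d : ℕ) {m : ℕ} {s : Finset ℕ} (hs : s ⊆ Icc m (m + d)) (ham : a ≤ m)
    (hmd : m + d ≤ b) :
    0 ≤ (-1) ^ (#s - 1) * dividedDiff s (↑) f := by
  induction d generalizing m s with
  | zero =>
    rcases subset_singleton_iff.mp (by simpa using hs) with rfl | rfl
    · simp [dividedDiff]
    · simpa using hf.neg_one_pow_mul_dividedDiff_Icc_nonneg (k := 0) ham hmd
  | succ d ih =>
    have hcard_le : #s ≤ d + 2 := by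
      have := card_le_card hs
      simp only [Nat.card_Icc] at this
      omega
    by_cases hfull : #s = d + 2
    · rw [hfull, eq_of_subset_of_card_le hs (by simp; omega)]
      exact hf.neg_one_pow_mul_dividedDiff_Icc_nonneg ham hmd
    have hlow {t : Finset ℕ} (ht : t ⊆ Icc m (m + (d + 1))) (hmt : m ∉ t) :
        t ⊆ Icc (m + 1) (m + 1 + d) := fun x hx => by
      have := mem_Icc.mp (ht hx)
      have : x ≠ m := fun h => hmt (h ▸ hx)
      exact mem_Icc.mpr (by omega)
    have hhigh {t : Finset ℕ} (ht : t ⊆ Icc m (m + (d + 1))) (hMt : m + (d + 1) ∉ t) :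
        t ⊆ Icc m (m + d) := fun x hx => by
      have := mem_Icc.mp (ht hx)
      have : x ≠ m + (d + 1) := fun h => hMt (h ▸ hx)
      exact mem_Icc.mpr (by omega)
    by_cases hm : m ∈ s
    swap
    · exact ih (hlow hs hm) (by omega) (by omega)
    by_cases hM : m + (d + 1) ∈ s
    swap
    · exact ih (hhigh hs hM) ham (by omega)
    obtain ⟨y, hy, hys⟩ := exists_mem_notMem_of_card_lt_card (s := s)
      (t := Icc m (m + (d + 1))) (by simp; omega)
    have hmy : m < y := lt_of_le_of_ne (mem_Icc.mp hy).1 fun h => hys (h ▸ hm)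
    have hyM : y < m + (d + 1) := lt_of_le_of_ne (mem_Icc.mp hy).2 fun h => hys (h ▸ hM)
    have hfilled : insert y s ⊆ Icc m (m + (d + 1)) := insert_subset hy hs
    have hcard : ∀ u ∈ insert y s, #((insert y s).erase u) = #s := fun u hu => by
      rw [card_erase_of_mem hu, card_insert_of_notMem hys, Nat.add_sub_cancel]
    have hfill := mul_dividedDiff_erase_nonneg_of_lt_of_lt (r := f) (ε := (-1) ^ (#s - 1))
      Nat.cast_injective.injOn (mem_insert_of_mem hm) (mem_insert_self y s)
      (mem_insert_of_mem hM) (Nat.cast_lt.mpr hmy) (Nat.cast_lt.mpr hyM)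
    rw [erase_insert hys] at hfill
    refine hfill ?_ ?_
    · rw [← hcard m (mem_insert_of_mem hm)]
      exact ih (hlow ((erase_subset _ _).trans hfilled) (notMem_erase _ _)) (by omega) (by omega)
    · rw [← hcard _ (mem_insert_of_mem hM)]
      exact ih (hhigh ((erase_subset _ _).trans hfilled) (notMem_erase _ _)) ham (by omega)

theorem neg_one_pow_mul_dividedDiff_nonneg (hf : CompletelyMonotonicOn f a b) {s : Finset ℕ}
    (hs : s ⊆ Icc a b) : 0 ≤ (-1) ^ (#s - 1) * dividedDiff s (↑) f := by
  obtain rfl | ⟨x, hx⟩ := s.eq_empty_or_nonempty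
  · simp [dividedDiff]
  have hab : a ≤ b := nonempty_Icc.mp ⟨x, hs hx⟩
  exact hf.neg_one_pow_mul_dividedDiff_nonneg_of_subset_Icc (b - a)
    (by rwa [Nat.add_sub_cancel' hab]) le_rfl (by omega)

end CompletelyMonotonicOn

/-- Lemma 4.9, expansion (14): with `f` completely
monotonic on `{0,…,n}`, the `a i` (for `i < r`) distinct in `{0,…,n}`, and
`p` the polynomial of degree `< r` interpolating `f` at the `a i`, the
polynomial `p` expands as `p(x) = ∑_{j=0}^{r−1} c_j ∏_{i=1}^{j} (a_i − x)`
with all coefficients `c_j ≥ 0`. -/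
theorem interpolation_nonneg_coeffs {n r : ℕ} (f : ℕ → ℝ)
    (hf : CompletelyMonotonicOn f 0 n)
    (a : ℕ → ℕ) (ha : ∀ i, i < r → a i ≤ n)
    (hinj : ∀ i, i < r → ∀ j, j < r → a i = a j → i = j)
    (p : Polynomial ℝ) (hdeg : p.degree < (r : WithBot ℕ))
    (hp : ∀ i, i < r → p.eval ((a i : ℝ)) = f (a i)) :
    ∃ c : ℕ → ℝ, (∀ j, j < r → 0 ≤ c j) ∧
      ∀ x : ℝ, p.eval x = ∑ j ∈ Finset.range r, c j * ∏ i ∈ Finset.range j, ((a i : ℝ) - x) := by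
  have ha_inj : Set.InjOn a (range r) := fun i hi j hj h =>
    hinj i (mem_range.mp hi) j (mem_range.mp hj) h
  have hv : Set.InjOn ((↑) ∘ a : ℕ → ℝ) (range r) := Nat.cast_injective.comp_injOn ha_inj
  have hnewton : p = ∑ j ∈ range r,
      C (dividedDiff (range (j + 1)) ((↑) ∘ a) (f ∘ a)) * nodal (range j) ((↑) ∘ a) := by
    rw [← interpolate_range_eq_sum_dividedDiff_mul_nodal _ hv]
    exact eq_interpolate_of_eval_eq _ hv (by rwa [card_range]) fun i hi => hp i (mem_range.mp hi)
  refine ⟨fun j => (-1) ^ j * dividedDiff (range (j + 1)) ((↑) ∘ a) (f ∘ a),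
    fun j hj => ?_, fun x => ?_⟩
  · have hj_inj : Set.InjOn a (range (j + 1)) := ha_inj.mono (by simpa using hj)
    have hsign := hf.neg_one_pow_mul_dividedDiff_nonneg (s := (range (j + 1)).image a)
      fun x hx => by
        obtain ⟨i, hi, rfl⟩ := mem_image.mp hx
        exact mem_Icc.mpr ⟨Nat.zero_le _, ha i (by simp at hi; omega)⟩
    rwa [card_image_of_injOn hj_inj, card_range, Nat.add_sub_cancel,
      dividedDiff_image hj_inj] at hsign
  · rw [hnewton, eval_finsetSum]
    refine sum_congr rfl fun j _ => ?_
    have hflip : ∏ i ∈ range j, (x - ((↑) ∘ a) i)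
        = (-1) ^ j * ∏ i ∈ range j, ((a i : ℝ) - x) := by
      simpa using prod_neg (s := range j) fun i => (a i : ℝ) - x
    rw [eval_mul, eval_C, eval_nodal, hflip]
    ring
end

section
/- Let q ≥ 2, n ≥ 1, and let 𝐚 be a quasicode of length n over an alphabet of size q. Suppose 𝐚 is a 1-design and its support consists either of a single integer or of two consecutive integers. Then 𝐚 is a universally optimal quasicode. -/
open Finset

/-!
A completely monotonic `f` is in particular decreasing and convex on `{0, …, n}`, so the secant
line `ℓ` of `f` through two consecutive points `b, b + 1` is a non-increasing affine minorant of
`f` touching it on the support of `A`. Since `K₁(i) = (q − 1)n − qi`, the Delsarte inequality for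
`K₁` bounds the first moment `∑ i Bᵢ` of every quasicode of size `N` by `(q − 1)nN/q`, which the
`1`-design `A` attains. Hence
`∑ f(i) Bᵢ ≥ (f − ℓ)(0) + ∑ ℓ(i) Bᵢ ≥ (f − ℓ)(0) + ∑ ℓ(i) Aᵢ = ∑ f(i) Aᵢ`.
-/

lemma kraw_one {n q i : ℕ} (hi : i ≤ n) : kraw n q 1 i = ((q : ℝ) - 1) * n - q * i := by
  simp only [kraw, sum_range_succ, range_one, sum_singleton, Nat.sub_zero, Nat.sub_self,
    Nat.choose_zero_right, Nat.choose_one_right, Nat.cast_sub hi]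
  push_cast
  ring

lemma sum_mul_kraw_one (n q : ℕ) (C : ℕ → ℝ) :
    ∑ i ∈ range (n + 1), C i * kraw n q 1 i =
      ((q : ℝ) - 1) * n * ∑ i ∈ range (n + 1), C i - q * ∑ i ∈ range (n + 1), (i : ℝ) * C i := by
  rw [Finset.mul_sum, Finset.mul_sum, ← Finset.sum_sub_distrib]
  refine Finset.sum_congr rfl fun i hi => ?_
  rw [kraw_one (Nat.lt_succ_iff.mp (mem_range.mp hi))]
  ring

lemma IsQuasicode.mul_sum_mul_le {q n : ℕ} {N : ℝ} {B : ℕ → ℝ} (hB : IsQuasicode q n N B)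
    (hn : 1 ≤ n) : q * ∑ i ∈ range (n + 1), (i : ℝ) * B i ≤ ((q : ℝ) - 1) * n * N := by
  have := hB.delsarte 1 hn
  rw [sum_mul_kraw_one, hB.size] at this
  linarith

lemma IsDesign.mul_sum_mul_eq {q n : ℕ} {N : ℝ} {A : ℕ → ℝ} (hA : IsDesign q n 1 A)
    (hsize : ∑ i ∈ range (n + 1), A i = N) :
    q * ∑ i ∈ range (n + 1), (i : ℝ) * A i = ((q : ℝ) - 1) * n * N := by
  have := hA 1 le_rfl le_rfl
  rw [sum_mul_kraw_one, hsize] at this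
  linarith

lemma sum_mul_le_of_isDesign {q n : ℕ} (hq : 0 < q) (hn : 1 ≤ n) {N : ℝ} {A B : ℕ → ℝ}
    (hA : IsQuasicode q n N A) (hdesign : IsDesign q n 1 A) (hB : IsQuasicode q n N B) :
    ∑ i ∈ range (n + 1), (i : ℝ) * B i ≤ ∑ i ∈ range (n + 1), (i : ℝ) * A i := by
  refine le_of_mul_le_mul_left ?_ (Nat.cast_pos.mpr hq : (0 : ℝ) < q)
  rw [hdesign.mul_sum_mul_eq hA.size]
  exact hB.mul_sum_mul_le hn

/-- The linear programming bound with a degree-one test function. -/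
lemma energy_le_of_affine_minorant {q n : ℕ} (hq : 0 < q) (hn : 1 ≤ n) {N : ℝ} {A B : ℕ → ℝ}
    (hA : IsQuasicode q n N A) (hdesign : IsDesign q n 1 A) (hB : IsQuasicode q n N B)
    {f : ℕ → ℝ} {α β : ℝ} (hβ : β ≤ 0) (hle : ∀ x ≤ n, α + β * x ≤ f x)
    (heq : ∀ i ∈ supp n A, f i = α + β * i) :
    ∑ i ∈ range (n + 1), f i * A i ≤ ∑ i ∈ range (n + 1), f i * B i := by
  set g : ℕ → ℝ := fun x => f x - (α + β * x) with hg
  have energy_eq : ∀ C : ℕ → ℝ, ∑ i ∈ range (n + 1), f i * C i =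
      ∑ i ∈ range (n + 1), g i * C i +
        (α * ∑ i ∈ range (n + 1), C i + β * ∑ i ∈ range (n + 1), (i : ℝ) * C i) := by
    intro C
    rw [Finset.mul_sum, Finset.mul_sum, ← Finset.sum_add_distrib, ← Finset.sum_add_distrib]
    exact Finset.sum_congr rfl fun i _ => by ring
  have hzero : (0 : ℕ) ∈ range (n + 1) := mem_range.mpr n.succ_pos
  have hgA : ∑ i ∈ range (n + 1), g i * A i = g 0 := by
    rw [Finset.sum_eq_single_of_mem 0 hzero, hA.zeroth, mul_one]
    intro i hi hi0
    by_cases hAi : A i = 0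
    · rw [hAi, mul_zero]
    · have : i ∈ supp n A := by
        simp only [supp, mem_filter, mem_Icc]
        exact ⟨⟨Nat.one_le_iff_ne_zero.mpr hi0, Nat.lt_succ_iff.mp (mem_range.mp hi)⟩, hAi⟩
      simp [hg, heq i this]
  have hgB : g 0 ≤ ∑ i ∈ range (n + 1), g i * B i := by
    have hg_nonneg : ∀ i ∈ range (n + 1), 0 ≤ g i * B i := fun i hi =>
      have hin := Nat.lt_succ_iff.mp (mem_range.mp hi)
      mul_nonneg (sub_nonneg.mpr (hle i hin)) (hB.nonneg i hin)
    simpa [hB.zeroth] using Finset.single_le_sum hg_nonneg hzero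
  have hmoment := sum_mul_le_of_isDesign hq hn hA hdesign hB
  rw [energy_eq A, energy_eq B, hgA, hA.size, hB.size]
  nlinarith

namespace CompletelyMonotonicOn

variable {f : ℕ → ℝ} {n : ℕ}

lemma fdiff_nonpos (hf : CompletelyMonotonicOn f 0 n) {i : ℕ} (hi : i < n) :
    fdiff f i ≤ 0 := by
  have := hf 1 i i.zero_le hi
  rwa [pow_one, Function.iterate_one, neg_one_mul, neg_nonneg] at this

lemma monotoneOn_fdiff (hf : CompletelyMonotonicOn f 0 n) :
    MonotoneOn (fdiff f) (Set.Iio n) := by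
  refine monotoneOn_of_le_add_one Set.ordConnected_Iio fun i _ _ hi1 => ?_
  have := hf 2 i i.zero_le (by simp only [Set.mem_Iio] at hi1; omega)
  simp only [fdiff, Function.iterate_succ, Function.iterate_zero, Function.comp_apply,
    id_eq, neg_one_sq, one_mul] at this ⊢
  linarith

end CompletelyMonotonicOn

lemma secant_le_of_monotoneOn_fdiff {f : ℕ → ℝ} {n b : ℕ}
    (hconv : MonotoneOn (fdiff f) (Set.Iio n)) (hb : b < n) {x : ℕ} (hx : x ≤ n) :
    f b + fdiff f b * ((x : ℝ) - b) ≤ f x := by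
  set g : ℕ → ℝ := fun x => f x - (f b + fdiff f b * ((x : ℝ) - b)) with hg
  have hstep : ∀ i, g (i + 1) - g i = fdiff f i - fdiff f b := by
    intro i
    simp only [hg, fdiff]
    push_cast
    ring
  have hmono : MonotoneOn g (Set.Icc b n) :=
    monotoneOn_of_le_add_one Set.ordConnected_Icc fun i _ hi hi1 => by
      have := hconv hb (show i < n by simp only [Set.mem_Icc] at hi1; omega) hi.1
      linarith [hstep i]
  have hanti : AntitoneOn g (Set.Iic b) :=
    antitoneOn_of_add_one_le Set.ordConnected_Iic fun i _ _ hi1 => by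
      have := hconv (show i < n by simp only [Set.mem_Iic] at hi1; omega) hb
        (show i ≤ b by simp only [Set.mem_Iic] at hi1; omega)
      linarith [hstep i]
  have hgb : g b = 0 := by simp [hg]
  suffices 0 ≤ g x by simp only [hg] at this; linarith
  rcases le_total b x with hbx | hxb
  · exact hgb ▸ hmono ⟨le_rfl, hb.le⟩ ⟨hbx, hx⟩ hbx
  · exact hgb ▸ hanti (Set.mem_Iic.mpr hxb) (Set.mem_Iic.mpr le_rfl) hxb

lemma exists_supp_subset_pair {n a : ℕ} {A : ℕ → ℝ}
    (hsupp : supp n A = {a} ∨ supp n A = {a, a + 1}) :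
    ∃ b, b < n ∧ ∀ i ∈ supp n A, i = b ∨ i = b + 1 := by
  have hmem : ∀ i ∈ supp n A, 1 ≤ i ∧ i ≤ n := fun i hi => by
    simp only [supp, mem_filter, mem_Icc] at hi
    exact hi.1
  rcases hsupp with hs | hs
  · obtain ⟨ha1, han⟩ := hmem a (by simp [hs])
    rcases han.lt_or_eq with halt | rfl
    · exact ⟨a, halt, fun i hi => Or.inl (by simpa [hs] using hi)⟩
    · exact ⟨a - 1, by omega, fun i hi => Or.inr (by rw [hs, mem_singleton] at hi; omega)⟩
  · exact ⟨a, hmem (a + 1) (by simp [hs]) |>.2, fun i hi => by simpa [hs] using hi⟩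

/-- Proposition 5.5: if a quasicode `A` is a `1`-design
and its support consists of a single integer or two consecutive integers,
then `A` is a universally optimal quasicode. -/
theorem uo_of_one_design_small_support {q n : ℕ} (hq : 2 ≤ q) (hn : 1 ≤ n)
    {N : ℝ} {A : ℕ → ℝ} (hA : IsQuasicode q n N A)
    (hdesign : IsDesign q n 1 A)
    (hsupp : ∃ a : ℕ, supp n A = {a} ∨ supp n A = {a, a+1}) :
    IsUOQuasicode q n N A := by
  refine ⟨hA, fun f hf B hB => ?_⟩
  obtain ⟨a, ha⟩ := hsupp
  obtain ⟨b, hb, hsub⟩ := exists_supp_subset_pair ha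
  refine energy_le_of_affine_minorant (by omega) hn hA hdesign hB (hf.fdiff_nonpos hb)
    (α := f b - fdiff f b * b) (fun x hx => ?_) (fun i hi => ?_)
  · linarith [secant_le_of_monotoneOn_fdiff hf.monotoneOn_fdiff hb hx]
  · rcases hsub i hi with rfl | rfl
    · ring
    · simp only [fdiff]
      push_cast
      ring
end
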